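/- arXiv:2008.04593 — 4 statements merged into one kernel-verified Lean document; each statement's English description precedes it below -/
import Mathlib

section
/- For every monotone gridding matrix M, the refinement M^{×2} admits a consistent orientation. -/
namespace PPM

noncomputable section

/-- Intervalicity: minimum number of pairwise disjoint integer intervals covering `A`. -/
def intervalicity {n : ℕ} (A : Finset (Fin n)) : ℕ :=
  sInf {m | ∃ F : Finset (Finset (Fin n)), F.card = m ∧
    (∀ I ∈ F, ∃ a b : Fin n, I = Finset.Icc a b) ∧
    (F : Set (Finset (Fin n))).PairwiseDisjoint id ∧
    F.sup id = A}

/-- Grid-complexity of a point set. -/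
def gridComplexity {n : ℕ} (S : Finset (Fin n × Fin n)) : ℕ :=
  max (intervalicity (S.image Prod.fst)) (intervalicity (S.image Prod.snd))

/-- The diagram of a permutation. -/
def diagram {n : ℕ} (π : Equiv.Perm (Fin n)) : Finset (Fin n × Fin n) :=
  Finset.univ.image (fun i => (i, π i))

/-- Rooted binary trees with labeled leaves. -/
inductive GTree (α : Type) where
  | leaf : α → GTree α
  | node : GTree α → GTree α → GTree α

namespace GTree
variable {α : Type}

def leafList : GTree α → List α
  | leaf a => [a]
  | node l r => l.leafList ++ r.leafList

def subtrees : GTree α → List (GTree α)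
  | leaf a => [leaf a]
  | node l r => node l r :: (l.subtrees ++ r.subtrees)

def IsCaterpillar : GTree α → Prop
  | leaf _ => True
  | node l r => ((∃ a, l = leaf a) ∨ (∃ a, r = leaf a)) ∧ IsCaterpillar l ∧ IsCaterpillar r

def leafDepth [DecidableEq α] : GTree α → α → ℕ
  | leaf _, _ => 0
  | node l r, a => if a ∈ l.leafList then l.leafDepth a + 1 else r.leafDepth a + 1

end GTree

/-- Grid-width of a grid tree. -/
def treeGW {n : ℕ} (T : GTree (Fin n × Fin n)) : ℕ :=
  (T.subtrees.map (fun t => gridComplexity t.leafList.toFinset)).foldr max 0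

/-- `T` is a grid tree of `π`: its leaves are labeled bijectively by the points of `π`. -/
def IsGridTree {n : ℕ} (π : Equiv.Perm (Fin n)) (T : GTree (Fin n × Fin n)) : Prop :=
  T.leafList.Nodup ∧ T.leafList.toFinset = diagram π

/-- Grid-width of a permutation. -/
def gw {n : ℕ} (π : Equiv.Perm (Fin n)) : ℕ :=
  sInf {w | ∃ T, IsGridTree π T ∧ treeGW T = w}

/-- Path-width of a permutation: minimum over caterpillar grid trees. -/
def pw {n : ℕ} (π : Equiv.Perm (Fin n)) : ℕ :=
  sInf {w | ∃ T, IsGridTree π T ∧ T.IsCaterpillar ∧ treeGW T = w}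

/-- The `i`-th prefix point set of `π` in `σ`-ordering. -/
def prefixSet {n : ℕ} (π σ : Equiv.Perm (Fin n)) (i : Fin n) : Finset (Fin n × Fin n) :=
  (Finset.univ.filter (fun j => j ≤ i)).image (fun j => (σ j, π (σ j)))

/-- Path-width of `π` in `σ`-ordering. -/
def pwOrd {n : ℕ} (π σ : Equiv.Perm (Fin n)) : ℕ :=
  Finset.univ.sup (fun i => gridComplexity (prefixSet π σ i))

/-- Horizontal path-width: `σ` is the identity (left-to-right order). -/
def hpw {n : ℕ} (π : Equiv.Perm (Fin n)) : ℕ := pwOrd π 1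

/-- Vertical path-width: `σ = π⁻¹` (bottom-to-top order). -/
def vpw {n : ℕ} (π : Equiv.Perm (Fin n)) : ℕ := pwOrd π π⁻¹

/-- Pattern containment: `τ` contains `π`. -/
def Contains {n k : ℕ} (τ : Equiv.Perm (Fin n)) (π : Equiv.Perm (Fin k)) : Prop :=
  ∃ f : Fin k → Fin n, StrictMono f ∧ ∀ i j, π i < π j ↔ τ (f i) < τ (f j)

/-- A permutation class, given by its members of each length. -/
abbrev PermClass := ∀ n : ℕ, Set (Equiv.Perm (Fin n))

/-- Closure under pattern containment. -/
def IsPermClass (C : PermClass) : Prop :=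
  ∀ {n k : ℕ} (τ : Equiv.Perm (Fin n)) (π : Equiv.Perm (Fin k)),
    τ ∈ C n → Contains τ π → π ∈ C k

/-- `π` is griddable by the monotone gridding matrix `M`
(`some true` = Inc, `some false` = Dec, `none` = empty);
columns are the first index, rows the second. -/
def MonGriddable {n k l : ℕ} (M : Fin k → Fin l → Option Bool)
    (π : Equiv.Perm (Fin n)) : Prop :=
  ∃ (c : Fin n → Fin k) (r : Fin n → Fin l), Monotone c ∧ Monotone r ∧
    (∀ i : Fin n, (M (c i) (r (π i))).isSome) ∧
    (∀ i j : Fin n, i < j → c i = c j → r (π i) = r (π j) →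
      ∀ b, M (c i) (r (π i)) = some b → (if b then π i < π j else π j < π i))

/-- Adjacency of cells in the cell graph of a monotone gridding matrix:
both cells nonempty, sharing a row or a column, with only empty cells in between. -/
def MonCellAdj {k l : ℕ} (M : Fin k → Fin l → Option Bool)
    (p q : Fin k × Fin l) : Prop :=
  (M p.1 p.2).isSome ∧ (M q.1 q.2).isSome ∧
  ((p.1 = q.1 ∧ p.2 ≠ q.2 ∧ ∀ j : Fin l,
      ((p.2 < j ∧ j < q.2) ∨ (q.2 < j ∧ j < p.2)) → M p.1 j = Option.none) ∨
   (p.2 = q.2 ∧ p.1 ≠ q.1 ∧ ∀ i : Fin k,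
      ((p.1 < i ∧ i < q.1) ∨ (q.1 < i ∧ i < p.1)) → M i p.2 = Option.none))

/-- The cell graph of a monotone gridding matrix. -/
def monCellGraph {k l : ℕ} (M : Fin k → Fin l → Option Bool) :
    SimpleGraph (Fin k × Fin l) :=
  SimpleGraph.fromRel (MonCellAdj M)

/-- A consistent orientation of a monotone gridding matrix, signs coded by `Bool`. -/
def ConsistentOrientation {k l : ℕ} (M : Fin k → Fin l → Option Bool)
    (c : Fin k → Bool) (r : Fin l → Bool) : Prop :=
  ∀ i j, (M i j = some true → c i = r j) ∧ (M i j = some false → c i ≠ r j)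

/-- The refinement `M^{×q}` of a monotone gridding matrix. -/
def refine {k l : ℕ} (M : Fin k → Fin l → Option Bool) (q : ℕ) :
    Fin (q * k) → Fin (q * l) → Option Bool :=
  fun i j =>
    match M ⟨i.val / q, Nat.div_lt_of_lt_mul i.isLt⟩
            ⟨j.val / q, Nat.div_lt_of_lt_mul j.isLt⟩ with
    | some true => if i.val % q = j.val % q then some true else none
    | some false => if i.val % q + j.val % q = q - 1 then some false else none
    | none => none

/-- The restriction of `π` to the position set `P` is order-isomorphic to a member of `C`. -/
def CellPattern {n : ℕ} (π : Equiv.Perm (Fin n)) (P : Finset (Fin n))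
    (C : PermClass) : Prop :=
  ∃ m : ℕ, ∃ σ ∈ C m, ∃ f : Fin m → Fin n, StrictMono f ∧
    Finset.univ.image f = P ∧ ∀ i j, σ i < σ j ↔ π (f i) < π (f j)

/-- `π` is griddable by a gridding matrix with permutation-class entries. -/
def GenGriddable {n k l : ℕ} (M : Fin k → Fin l → PermClass)
    (π : Equiv.Perm (Fin n)) : Prop :=
  ∃ (c : Fin n → Fin k) (r : Fin n → Fin l), Monotone c ∧ Monotone r ∧
    ∀ (a : Fin k) (b : Fin l),
      (Finset.univ.filter (fun i => c i = a ∧ r (π i) = b) = ∅) ∨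
      CellPattern π (Finset.univ.filter (fun i => c i = a ∧ r (π i) = b)) (M a b)

/-- A class containing some nonempty permutation. -/
def ClassNonempty (C : PermClass) : Prop := ∃ n, 0 < n ∧ (C n).Nonempty

/-- An infinite class: members of arbitrarily large lengths. -/
def ClassInfinite (C : PermClass) : Prop := ∀ m, ∃ n, m ≤ n ∧ (C n).Nonempty

/-- Cell adjacency for a general gridding matrix. -/
def GenCellAdj {k l : ℕ} (M : Fin k → Fin l → PermClass)
    (p q : Fin k × Fin l) : Prop :=
  ClassNonempty (M p.1 p.2) ∧ ClassNonempty (M q.1 q.2) ∧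
  ((p.1 = q.1 ∧ p.2 ≠ q.2 ∧ ∀ j : Fin l,
      ((p.2 < j ∧ j < q.2) ∨ (q.2 < j ∧ j < p.2)) → ¬ ClassNonempty (M p.1 j)) ∨
   (p.2 = q.2 ∧ p.1 ≠ q.1 ∧ ∀ i : Fin k,
      ((p.1 < i ∧ i < q.1) ∨ (q.1 < i ∧ i < p.1)) → ¬ ClassNonempty (M i p.2)))

/-- The cell graph of a general gridding matrix. -/
def genCellGraph {k l : ℕ} (M : Fin k → Fin l → PermClass) :
    SimpleGraph (Fin k × Fin l) :=
  SimpleGraph.fromRel (GenCellAdj M)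

/-- Unbounded horizontal path-width of a class. -/
def UnboundedHPW (C : PermClass) : Prop := ∀ K, ∃ n, ∃ π ∈ C n, K < hpw π

/-- Unbounded vertical path-width of a class. -/
def UnboundedVPW (C : PermClass) : Prop := ∀ K, ∃ n, ∃ π ∈ C n, K < vpw π

/-- `(p, q)` is a bumper. -/
def Bumper {k l : ℕ} (M : Fin k → Fin l → PermClass) (p q : Fin k × Fin l) : Prop :=
  (UnboundedHPW (M q.1 q.2) ∧ p.1 = q.1) ∨ (UnboundedVPW (M q.1 q.2) ∧ p.2 = q.2)

/-- The cell graph of `M` contains a bumper-ended path. -/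
def HasBumperEndedPath {k l : ℕ} (M : Fin k → Fin l → PermClass) : Prop :=
  ∃ (L : List (Fin k × Fin l)) (h : 2 ≤ L.length),
    List.Chain' (genCellGraph M).Adj L ∧ L.Nodup ∧
    Bumper M (L.get ⟨1, by omega⟩) (L.get ⟨0, by omega⟩) ∧
    Bumper M (L.get ⟨L.length - 2, by omega⟩) (L.get ⟨L.length - 1, by omega⟩)

/-- Horizontal alternation: all even entries (1-based values) precede all odd entries. -/
def IsHorizAlt {n : ℕ} (π : Equiv.Perm (Fin n)) : Prop :=
  ∀ i j : Fin n, i < j → ¬(Odd ((π i).val + 1) ∧ Even ((π j).val + 1))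

/-- `σ` is monotone on the positions satisfying `P`. -/
def MonOn {n : ℕ} (σ : Equiv.Perm (Fin n)) (P : Fin n → Prop) : Prop :=
  (∀ i j, i < j → P i → P j → σ i < σ j) ∨ (∀ i j, i < j → P i → P j → σ j < σ i)

/-- Monotone horizontal alternation. -/
def IsMonHorizAlt {n : ℕ} (σ : Equiv.Perm (Fin n)) : Prop :=
  IsHorizAlt σ ∧ MonOn σ (fun i => Odd ((σ i).val + 1)) ∧
    MonOn σ (fun i => Even ((σ i).val + 1))

/-- The 1×2 horizontal monotone juxtaposition matrix. -/
def juxH (b₁ b₂ : Bool) : Fin 2 → Fin 1 → Option Bool :=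
  fun i _ => some (if i = 0 then b₁ else b₂)

/-- No three consecutive cells of the list share a row or a column. -/
def ProperTurning {k l : ℕ} (L : List (Fin k × Fin l)) : Prop :=
  ∀ a b c : Fin k × Fin l, [a, b, c] <:+: L →
    ¬(a.1 = b.1 ∧ b.1 = c.1) ∧ ¬(a.2 = b.2 ∧ b.2 = c.2)

/-- The class of increasing (`true`) or decreasing (`false`) permutations. -/
def monClass (b : Bool) : PermClass :=
  fun n => {π | ∀ i j : Fin n, i < j → (if b then π i < π j else π j < π i)}

end

end PPM

/-!
Colour every row and every column of `M^{×q}` by the parity of its index. An `Inc` cell of the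
refinement lies on a block diagonal, so its row and column have equal residues mod `q`; a `Dec`
cell lies on a block anti-diagonal, so the residues add up to the odd number `q - 1`. When `q` is
even the residue mod `q` determines the parity, so both conditions of a consistent orientation hold.
-/

namespace PPM

variable {k l q : ℕ} (M : Fin k → Fin l → Option Bool)

theorem mod_eq_mod_of_refine_eq_some_true {i : Fin (q * k)} {j : Fin (q * l)}
    (h : refine M q i j = some true) : i.val % q = j.val % q := by
  unfold refine at h
  split at h <;> (try split_ifs at h) <;> simp_all

theorem mod_add_mod_of_refine_eq_some_false {i : Fin (q * k)} {j : Fin (q * l)}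
    (h : refine M q i j = some false) : i.val % q + j.val % q = q - 1 := by
  unfold refine at h
  split at h <;> (try split_ifs at h) <;> simp_all

theorem consistentOrientation_refine_of_even (hq : Even q) :
    ConsistentOrientation (refine M q) (fun i => decide (Even i.val))
      (fun j => decide (Even j.val)) := by
  have parity_mod {n : ℕ} (a : Fin n) : a.val % q % 2 = a.val % 2 :=
    Nat.mod_mod_of_dvd _ (even_iff_two_dvd.mp hq)
  intro i j
  have hq0 : 0 < q := Nat.pos_of_mul_pos_right i.pos
  have hq2 : q % 2 = 0 := Nat.even_iff.mp hq
  have hi := parity_mod i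
  have hj := parity_mod j
  simp only [Nat.even_iff, decide_eq_decide, ne_eq]
  constructor
  · intro h
    have := mod_eq_mod_of_refine_eq_some_true M h
    omega
  · intro h
    have := mod_add_mod_of_refine_eq_some_false M h
    omega

end PPM

open PPM

/-- the refinement `M^{×2}` of any monotone gridding matrix admits a
consistent orientation. -/
theorem refine_two_consistentOrientation {k l : ℕ} (M : Fin k → Fin l → Option Bool) :
    ∃ (c : Fin (2 * k) → Bool) (r : Fin (2 * l) → Bool),
      ConsistentOrientation (refine M 2) c r :=
  ⟨_, _, consistentOrientation_refine_of_even M even_two⟩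
end

section
/- If M is a k × ℓ monotone gridding matrix admitting a consistent orientation and whose cell graph G_M is a forest, then every permutation in Grid(M) has path-width at most max(k, ℓ). -/
open PPM

/-!
Say that a point `i` must precede a point `j` if they share a column and `i` comes first in the
column's orientation, or they share a row and `i` comes first in the row's orientation; a
consistent orientation makes the two orders agree inside each cell. When the cell graph is a
forest this relation has no cycle: a leaf cell is alone in its column (say), so its points meet
the rest only through its row, where they can be interleaved with an existing schedule. Adding
the points to a caterpillar along a linear extension, each prefix is closed under predecessors,
so it meets every column in an interval of positions and every row in an interval of values:
its grid-complexity is at most `max k l`.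
-/

theorem Finset.eq_Icc_of_ordConnected {α : Type*} [LinearOrder α] [LocallyFiniteOrder α]
    {s : Finset α} (hs : s.Nonempty) (hconn : (s : Set α).OrdConnected) :
    s = Finset.Icc (s.min' hs) (s.max' hs) := by
  ext y
  refine ⟨fun hy => Finset.mem_Icc.2 ⟨s.min'_le y hy, s.le_max' y hy⟩, fun hy => ?_⟩
  exact hconn.out (s.min'_mem hs) (s.max'_mem hs) (Finset.mem_Icc.1 hy)

theorem SimpleGraph.IsAcyclic.exists_mem_forall_adj_eq {V : Type*} {G : SimpleGraph V}
    [Finite G.edgeSet] (hG : G.IsAcyclic) {s : Set V} (hs : s.Nonempty)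
    (hcl : ∀ u v, G.Adj u v → u ∈ s) : ∃ v ∈ s, ∀ a b, G.Adj v a → G.Adj v b → a = b := by
  by_cases hE : ∃ u w, G.Adj u w
  · obtain ⟨u₀, w₀, h₀⟩ := hE
    have : Nonempty V := ⟨u₀⟩
    obtain ⟨u, v, p, hp, hmax⟩ := Walk.exists_isPath_forall_isPath_length_le_length G
    have hnil : ¬p.Nil := fun h => by
      have := hmax _ _ (Walk.cons h₀ Walk.nil) (Walk.IsPath.nil.cons (by simpa using h₀.ne))
      simp [Walk.length_eq_zero_iff.2 h] at this
    have hsnd : ∀ a, G.Adj u a → a = p.snd := fun a ha => by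
      by_cases hs : a ∈ p.support
      · exact hG.eq_snd_of_adj_start hp ha hs
      · simpa using hmax _ _ (Walk.cons ha.symm p) (hp.cons hs)
    exact ⟨u, hcl u _ (p.adj_snd hnil), fun a b ha hb => (hsnd a ha).trans (hsnd b hb).symm⟩
  · push Not at hE
    obtain ⟨v, hv⟩ := hs
    exact ⟨v, hv, fun a _ ha => (hE v a ha).elim⟩

namespace PPM

theorem intervalicity_le_card {n : ℕ} {ι : Type*} [Fintype ι] [DecidableEq ι]
    (A : Finset (Fin n)) (g : Fin n → ι)
    (hg : ∀ a, (↑(A.filter (g · = a)) : Set (Fin n)).OrdConnected) :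
    intervalicity A ≤ Fintype.card ι := by
  set F := (Finset.univ.image fun a => A.filter (g · = a)).filter Finset.Nonempty
  have hF : ∀ I ∈ F, ∃ a, I = A.filter (g · = a) ∧ I.Nonempty := by
    simp only [F, Finset.mem_filter, Finset.mem_image, Finset.mem_univ, true_and]
    rintro I ⟨⟨a, rfl⟩, hI⟩
    exact ⟨a, rfl, hI⟩
  have hle : intervalicity A ≤ F.card := Nat.sInf_le ⟨F, rfl, ?_, ?_, ?_⟩
  · exact hle.trans <|
      (Finset.card_filter_le _ _).trans (Finset.card_image_le.trans_eq Finset.card_univ)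
  · intro I hI
    obtain ⟨a, rfl, hne⟩ := hF I hI
    exact ⟨_, _, Finset.eq_Icc_of_ordConnected hne (hg a)⟩
  · intro I hI J hJ hIJ
    obtain ⟨a, rfl, -⟩ := hF I hI
    obtain ⟨b, rfl, -⟩ := hF J hJ
    exact Finset.disjoint_filter.2 fun x _ hxa hxb => hIJ (by rw [← hxa, ← hxb])
  · ext x
    simp only [Finset.mem_sup, id, F, Finset.mem_filter, Finset.mem_image, Finset.mem_univ,
      true_and]
    refine ⟨fun ⟨I, ⟨⟨a, ha⟩, _⟩, hx⟩ => ?_, fun hx => ⟨_, ⟨⟨g x, rfl⟩, ⟨x, ?_⟩⟩, ?_⟩⟩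
    · subst ha; exact (Finset.mem_filter.1 hx).1
    all_goals simp [hx]

theorem intervalicity_singleton {n : ℕ} (a : Fin n) : intervalicity {a} = 1 := by
  have hmem : 1 ∈ {m | ∃ F : Finset (Finset (Fin n)), F.card = m ∧
      (∀ I ∈ F, ∃ a b : Fin n, I = Finset.Icc a b) ∧
      (F : Set (Finset (Fin n))).PairwiseDisjoint id ∧ F.sup id = {a}} :=
    ⟨{{a}}, rfl, by simpa using ⟨a, a, by simp⟩, by simp, by simp⟩
  refine le_antisymm (Nat.sInf_le hmem) (le_csInf ⟨1, hmem⟩ ?_)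
  rintro m ⟨F, rfl, -, -, hF⟩
  rw [Nat.one_le_iff_ne_zero, Ne, Finset.card_eq_zero]
  rintro rfl
  simp at hF

theorem gridComplexity_singleton {n : ℕ} (p : Fin n × Fin n) : gridComplexity {p} = 1 := by
  simp [gridComplexity, intervalicity_singleton]

namespace GTree

variable {α : Type}

theorem leafList_ne_nil : (T : GTree α) → T.leafList ≠ []
  | leaf _ => List.cons_ne_nil _ _
  | node l _ => by simp [leafList, leafList_ne_nil l]

def comb : (m : ℕ) → (Fin (m + 1) → α) → GTree α
  | 0, f => leaf (f 0)
  | m + 1, f => node (comb m (f ∘ Fin.castSucc)) (leaf (f (Fin.last _)))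

theorem leafList_comb : (m : ℕ) → (f : Fin (m + 1) → α) → (comb m f).leafList = List.ofFn f
  | 0, f => by simp [comb, leafList]
  | m + 1, f => by
    rw [comb, leafList, leafList_comb m, List.ofFn_succ' f, List.concat_eq_append]
    rfl

theorem isCaterpillar_comb : (m : ℕ) → (f : Fin (m + 1) → α) → (comb m f).IsCaterpillar
  | 0, _ => trivial
  | m + 1, _ => ⟨Or.inr ⟨_, rfl⟩, isCaterpillar_comb m _, trivial⟩

theorem mem_subtrees_comb [DecidableEq α] : (m : ℕ) → (f : Fin (m + 1) → α) →
    ∀ T ∈ (comb m f).subtrees, (∃ i, T.leafList.toFinset =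
      (Finset.univ.filter (· ≤ i)).image f) ∨ ∃ i, T = leaf (f i)
  | 0, f, T, hT => by
    simp only [comb, subtrees, List.mem_singleton] at hT
    exact Or.inr ⟨0, hT⟩
  | m + 1, f, T, hT => by
    simp only [comb, subtrees, List.mem_cons, List.mem_append, List.not_mem_nil, or_false] at hT
    rcases hT with rfl | hT | rfl
    · refine Or.inl ⟨Fin.last _, ?_⟩
      rw [← comb, leafList_comb]
      ext x
      simp only [List.mem_toFinset, List.mem_ofFn, Finset.mem_image, Finset.mem_filter,
        Finset.mem_univ, Fin.le_last, true_and]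
    · rcases mem_subtrees_comb m _ T hT with ⟨i, hi⟩ | ⟨i, rfl⟩
      · refine Or.inl ⟨i.castSucc, ?_⟩
        rw [hi]
        ext x
        simp only [Finset.mem_image, Finset.mem_filter, Finset.mem_univ, true_and,
          Function.comp_apply]
        constructor
        · rintro ⟨j, hj, rfl⟩
          exact ⟨j.castSucc, Fin.castSucc_le_castSucc_iff.2 hj, rfl⟩
        · rintro ⟨j, hj, rfl⟩
          refine ⟨j.castPred (Fin.ne_last_of_lt (hj.trans_lt i.castSucc_lt_last)), ?_, by simp⟩
          rwa [← Fin.castSucc_le_castSucc_iff, Fin.castSucc_castPred]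
      · exact Or.inr ⟨_, rfl⟩
    · exact Or.inr ⟨_, rfl⟩

end GTree

theorem isGridTree_comb {m : ℕ} (π σ : Equiv.Perm (Fin (m + 1))) :
    IsGridTree π (GTree.comb m fun j => (σ j, π (σ j))) := by
  rw [IsGridTree, GTree.leafList_comb, List.nodup_ofFn]
  refine ⟨fun a b h => σ.injective (congrArg Prod.fst h), ?_⟩
  ext x
  simp only [List.mem_toFinset, List.mem_ofFn, diagram, Finset.mem_image, Finset.mem_univ,
    true_and]
  exact ⟨fun ⟨j, hj⟩ => ⟨σ j, hj⟩, fun ⟨i, hi⟩ => ⟨σ.symm i, by simpa using hi⟩⟩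

theorem pw_le_pwOrd {n : ℕ} (π σ : Equiv.Perm (Fin n)) : pw π ≤ pwOrd π σ := by
  cases n with
  | zero =>
    have hno : {w | ∃ T, IsGridTree π T ∧ T.IsCaterpillar ∧ treeGW T = w} = ∅ := by
      refine Set.eq_empty_of_forall_notMem fun w ⟨T, _, _, _⟩ => ?_
      obtain ⟨x, -⟩ := List.exists_mem_of_ne_nil _ T.leafList_ne_nil
      exact x.1.elim0
    simp [pw, hno]
  | succ m =>
    set pt : Fin (m + 1) → Fin (m + 1) × Fin (m + 1) := fun j => (σ j, π (σ j))
    have hpw : pw π ≤ treeGW (GTree.comb m pt) :=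
      Nat.sInf_le ⟨_, isGridTree_comb π σ, GTree.isCaterpillar_comb m pt, rfl⟩
    refine hpw.trans ?_
    refine List.max_le_of_forall_le _ _ ?_
    simp only [List.mem_map]
    rintro _ ⟨T, hT, rfl⟩
    rcases GTree.mem_subtrees_comb m pt T hT with ⟨i, hi⟩ | ⟨i, rfl⟩
    · rw [hi]
      exact Finset.le_sup (f := fun i => gridComplexity (prefixSet π σ i)) (Finset.mem_univ i)
    · have h0 : prefixSet π σ 0 = {pt 0} := by
        simp [prefixSet, pt, Finset.filter_eq']
      calc gridComplexity [pt i].toFinset = gridComplexity (prefixSet π σ 0) := by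
            simp [h0, gridComplexity_singleton]
        _ ≤ pwOrd π σ :=
          Finset.le_sup (f := fun i => gridComplexity (prefixSet π σ i)) (Finset.mem_univ 0)

section CellGraph

variable {γ δ : Type*} [LinearOrder γ] [LinearOrder δ]

def CellAdj (C : Finset (γ × δ)) (p q : γ × δ) : Prop :=
  p ∈ C ∧ q ∈ C ∧
    ((p.1 = q.1 ∧ ∀ y, (p.2 < y ∧ y < q.2 ∨ q.2 < y ∧ y < p.2) → (p.1, y) ∉ C) ∨
     (p.2 = q.2 ∧ ∀ x, (p.1 < x ∧ x < q.1 ∨ q.1 < x ∧ x < p.1) → (x, p.2) ∉ C))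

def cellGraph (C : Finset (γ × δ)) : SimpleGraph (γ × δ) :=
  SimpleGraph.fromRel (CellAdj C)

variable {C : Finset (γ × δ)} {X Q : γ × δ}

theorem exists_cellGraph_adj_of_lt_col (hX : X ∈ C) (hQ : Q ∈ C) (h1 : Q.1 = X.1)
    (h2 : Q.2 < X.2) : ∃ N, (cellGraph C).Adj X N ∧ N.1 = X.1 ∧ N.2 < X.2 := by
  obtain ⟨N, hN, hmax⟩ := (C.filter fun P => P.1 = X.1 ∧ P.2 < X.2).exists_max_image Prod.snd
    ⟨Q, Finset.mem_filter.2 ⟨hQ, h1, h2⟩⟩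
  rw [Finset.mem_filter] at hN
  refine ⟨N, ⟨fun h => (h ▸ hN.2.2).false, Or.inl ⟨hX, hN.1, Or.inl ⟨hN.2.1.symm, ?_⟩⟩⟩, hN.2⟩
  rintro y (⟨hy1, hy2⟩ | ⟨hy1, hy2⟩) hy
  · exact (hy1.trans (hy2.trans hN.2.2)).false
  · exact (hmax (X.1, y) (Finset.mem_filter.2 ⟨hy, rfl, hy2⟩)).not_gt hy1

theorem exists_cellGraph_adj_of_gt_col (hX : X ∈ C) (hQ : Q ∈ C) (h1 : Q.1 = X.1)
    (h2 : X.2 < Q.2) : ∃ N, (cellGraph C).Adj X N ∧ N.1 = X.1 ∧ X.2 < N.2 := by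
  obtain ⟨N, hN, hmin⟩ := (C.filter fun P => P.1 = X.1 ∧ X.2 < P.2).exists_min_image Prod.snd
    ⟨Q, Finset.mem_filter.2 ⟨hQ, h1, h2⟩⟩
  rw [Finset.mem_filter] at hN
  refine ⟨N, ⟨fun h => (h ▸ hN.2.2).false, Or.inl ⟨hX, hN.1, Or.inl ⟨hN.2.1.symm, ?_⟩⟩⟩, hN.2⟩
  rintro y (⟨hy1, hy2⟩ | ⟨hy1, hy2⟩) hy
  · exact (hmin (X.1, y) (Finset.mem_filter.2 ⟨hy, rfl, hy1⟩)).not_gt hy2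
  · exact (hN.2.2.trans (hy1.trans hy2)).false

theorem exists_cellGraph_adj_of_lt_row (hX : X ∈ C) (hQ : Q ∈ C) (h1 : Q.2 = X.2)
    (h2 : Q.1 < X.1) : ∃ N, (cellGraph C).Adj X N ∧ N.2 = X.2 ∧ N.1 < X.1 := by
  obtain ⟨N, hN, hmax⟩ := (C.filter fun P => P.2 = X.2 ∧ P.1 < X.1).exists_max_image Prod.fst
    ⟨Q, Finset.mem_filter.2 ⟨hQ, h1, h2⟩⟩
  rw [Finset.mem_filter] at hN
  refine ⟨N, ⟨fun h => (h ▸ hN.2.2).false, Or.inl ⟨hX, hN.1, Or.inr ⟨hN.2.1.symm, ?_⟩⟩⟩, hN.2⟩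
  rintro x (⟨hx1, hx2⟩ | ⟨hx1, hx2⟩) hx
  · exact (hx1.trans (hx2.trans hN.2.2)).false
  · exact (hmax (x, X.2) (Finset.mem_filter.2 ⟨hx, rfl, hx2⟩)).not_gt hx1

theorem exists_cellGraph_adj_of_gt_row (hX : X ∈ C) (hQ : Q ∈ C) (h1 : Q.2 = X.2)
    (h2 : X.1 < Q.1) : ∃ N, (cellGraph C).Adj X N ∧ N.2 = X.2 ∧ X.1 < N.1 := by
  obtain ⟨N, hN, hmin⟩ := (C.filter fun P => P.2 = X.2 ∧ X.1 < P.1).exists_min_image Prod.fst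
    ⟨Q, Finset.mem_filter.2 ⟨hQ, h1, h2⟩⟩
  rw [Finset.mem_filter] at hN
  refine ⟨N, ⟨fun h => (h ▸ hN.2.2).false, Or.inl ⟨hX, hN.1, Or.inr ⟨hN.2.1.symm, ?_⟩⟩⟩, hN.2⟩
  rintro x (⟨hx1, hx2⟩ | ⟨hx1, hx2⟩) hx
  · exact (hmin (x, X.2) (Finset.mem_filter.2 ⟨hx, rfl, hx1⟩)).not_gt hx2
  · exact (hN.2.2.trans (hx1.trans hx2)).false

def IsFlankedInCol (C : Finset (γ × δ)) (X : γ × δ) : Prop :=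
  ∃ P ∈ C, ∃ Q ∈ C, P.1 = X.1 ∧ Q.1 = X.1 ∧ P.2 < X.2 ∧ X.2 < Q.2

def IsFlankedInRow (C : Finset (γ × δ)) (X : γ × δ) : Prop :=
  ∃ P ∈ C, ∃ Q ∈ C, P.2 = X.2 ∧ Q.2 = X.2 ∧ P.1 < X.1 ∧ X.1 < Q.1

theorem cellGraph_erase_le (hcol : ¬IsFlankedInCol C X) (hrow : ¬IsFlankedInRow C X) :
    cellGraph (C.erase X) ≤ cellGraph C := by
  have key : ∀ a b, CellAdj (C.erase X) a b → CellAdj C a b := by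
    rintro a b ⟨ha, hb, h⟩
    have haC := Finset.mem_of_mem_erase ha
    have hbC := Finset.mem_of_mem_erase hb
    refine ⟨haC, hbC, h.imp (fun ⟨h1, h⟩ => ⟨h1, fun y hy hyC => ?_⟩)
      (fun ⟨h1, h⟩ => ⟨h1, fun x hx hxC => ?_⟩)⟩
    · by_cases hyX : (a.1, y) = X
      · subst hyX
        rcases hy with ⟨hy1, hy2⟩ | ⟨hy1, hy2⟩
        exacts [hcol ⟨a, haC, b, hbC, rfl, h1.symm, hy1, hy2⟩,
          hcol ⟨b, hbC, a, haC, h1.symm, rfl, hy1, hy2⟩]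
      · exact h y hy (Finset.mem_erase.2 ⟨hyX, hyC⟩)
    · by_cases hxX : (x, a.2) = X
      · subst hxX
        rcases hx with ⟨hx1, hx2⟩ | ⟨hx1, hx2⟩
        exacts [hrow ⟨a, haC, b, hbC, rfl, h1.symm, hx1, hx2⟩,
          hrow ⟨b, hbC, a, haC, h1.symm, rfl, hx1, hx2⟩]
      · exact h x hx (Finset.mem_erase.2 ⟨hxX, hxC⟩)
  exact fun p q ⟨hne, h⟩ => ⟨hne, h.imp (key p q) (key q p)⟩

theorem exists_cellGraph_adj_of_col (hX : X ∈ C) (hQ : Q ∈ C) (h1 : Q.1 = X.1) (hQX : Q ≠ X) :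
    ∃ N, (cellGraph C).Adj X N ∧ N.2 ≠ X.2 := by
  rcases lt_or_gt_of_ne fun h2 => hQX (Prod.ext h1 h2) with h2 | h2
  · obtain ⟨N, hN, -, h⟩ := exists_cellGraph_adj_of_lt_col hX hQ h1 h2
    exact ⟨N, hN, h.ne⟩
  · obtain ⟨N, hN, -, h⟩ := exists_cellGraph_adj_of_gt_col hX hQ h1 h2
    exact ⟨N, hN, h.ne'⟩

theorem exists_cellGraph_adj_of_row (hX : X ∈ C) (hQ : Q ∈ C) (h1 : Q.2 = X.2) (hQX : Q ≠ X) :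
    ∃ N, (cellGraph C).Adj X N ∧ N.2 = X.2 := by
  rcases lt_or_gt_of_ne fun h2 => hQX (Prod.ext h2 h1) with h2 | h2
  · obtain ⟨N, hN, h, -⟩ := exists_cellGraph_adj_of_lt_row hX hQ h1 h2
    exact ⟨N, hN, h⟩
  · obtain ⟨N, hN, h, -⟩ := exists_cellGraph_adj_of_gt_row hX hQ h1 h2
    exact ⟨N, hN, h⟩

theorem finite_edgeSet_cellGraph (C : Finset (γ × δ)) : (cellGraph C).edgeSet.Finite := by
  refine ((C ×ˢ C).finite_toSet.image fun p => s(p.1, p.2)).subset ?_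
  rintro ⟨u, v⟩ ⟨-, ⟨hu, hv, -⟩ | ⟨hv, hu, -⟩⟩ <;>
    exact ⟨(u, v), Finset.mem_product.2 ⟨hu, hv⟩, rfl⟩

theorem exists_cell_alone_of_isAcyclic (hC : C.Nonempty) (hac : (cellGraph C).IsAcyclic) :
    ∃ X ∈ C, ¬IsFlankedInCol C X ∧ ¬IsFlankedInRow C X ∧
      ((∀ Q ∈ C, Q.1 = X.1 → Q = X) ∨ (∀ Q ∈ C, Q.2 = X.2 → Q = X)) := by
  have : Finite (cellGraph C).edgeSet := finite_edgeSet_cellGraph C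
  obtain ⟨X, hXC, huniq⟩ := hac.exists_mem_forall_adj_eq hC fun u v h => by
    rcases h with ⟨-, ⟨hu, -⟩ | ⟨-, hu, -⟩⟩ <;> exact hu
  refine ⟨X, hXC, ?_, ?_, ?_⟩
  · rintro ⟨P, hP, Q, hQ, hP1, hQ1, hP2, hQ2⟩
    obtain ⟨N, hN, -, hN2⟩ := exists_cellGraph_adj_of_lt_col hXC hP hP1 hP2
    obtain ⟨N', hN', -, hN'2⟩ := exists_cellGraph_adj_of_gt_col hXC hQ hQ1 hQ2
    exact (huniq N N' hN hN' ▸ hN2).asymm hN'2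
  · rintro ⟨P, hP, Q, hQ, hP1, hQ1, hP2, hQ2⟩
    obtain ⟨N, hN, -, hN2⟩ := exists_cellGraph_adj_of_lt_row hXC hP hP1 hP2
    obtain ⟨N', hN', -, hN'2⟩ := exists_cellGraph_adj_of_gt_row hXC hQ hQ1 hQ2
    exact (huniq N N' hN hN' ▸ hN2).asymm hN'2
  · by_contra! h
    obtain ⟨⟨P, hP, hP1, hPX⟩, ⟨Q, hQ, hQ2, hQX⟩⟩ := h
    obtain ⟨N, hN, hN2⟩ := exists_cellGraph_adj_of_col hXC hP hP1 hPX
    obtain ⟨N', hN', hN'2⟩ := exists_cellGraph_adj_of_row hXC hQ hQ2 hQX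
    exact hN2 (huniq N N' hN hN' ▸ hN'2)

end CellGraph

theorem monCellGraph_eq_cellGraph {k l : ℕ} (M : Fin k → Fin l → Option Bool) :
    monCellGraph M =
      cellGraph (Finset.univ.filter fun p : Fin k × Fin l => (M p.1 p.2).isSome) := by
  ext p q
  simp only [monCellGraph, cellGraph, SimpleGraph.fromRel_adj, MonCellAdj, Finset.mem_filter,
    CellAdj, Finset.mem_univ, true_and, ne_eq, Prod.ext_iff, Option.not_isSome_iff_eq_none]
  constructor <;> rintro ⟨hne, h⟩ <;> refine ⟨hne, ?_⟩ <;> tauto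

section Schedule

theorem exists_nat_lt_of_lt {α β : Type*} [Preorder β] (S : Finset α) (τ : α → β) :
    ∃ t : α → ℕ, ∀ i ∈ S, ∀ j ∈ S, τ i < τ j → t i < t j := by
  classical
  refine ⟨fun i => (S.filter (τ · < τ i)).card, fun i hi j hj hij => Finset.card_lt_card ?_⟩
  refine (Finset.ssubset_iff_of_subset fun x hx => ?_).2 ⟨i, ?_, ?_⟩
  · simp only [Finset.mem_filter] at hx ⊢
    exact ⟨hx.1, hx.2.trans hij⟩
  · simp [hi, hij]
  · simp

/-- Each point of `A` is placed right after the last point of the chain `Y` below it in `v`. -/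
theorem exists_nat_rank_extend {α κ : Type*} [LinearOrder κ] {R : α → α → Prop}
    {S A Y : Finset α} (v : α → κ) (t : α → ℕ)
    (ht : ∀ i ∈ S, ∀ j ∈ S, i ∉ A → j ∉ A → R i j → t i < t j)
    (hA : ∀ i ∈ A, ∀ j ∈ A, R i j → v i < v j)
    (hAout : ∀ i ∈ A, ∀ j ∈ S, j ∉ A → R i j → j ∈ Y ∧ v i < v j)
    (hAin : ∀ i ∈ A, ∀ j ∈ S, j ∉ A → R j i → j ∈ Y ∧ v j < v i)
    (hY : ∀ i ∈ Y, ∀ j ∈ Y, v i < v j → t i < t j) :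
    ∃ t' : α → ℕ, ∀ i ∈ S, ∀ j ∈ S, R i j → t' i < t' j := by
  classical
  let m : α → ℕ := fun i => (Y.filter (v · < v i)).sup (t · + 1)
  let τ : α → ℕ ×ₗ WithBot κ := fun i =>
    if i ∈ A then toLex (m i, (v i : WithBot κ)) else toLex (t i + 1, ⊥)
  obtain ⟨t', ht'⟩ := exists_nat_lt_of_lt S τ
  refine ⟨t', fun i hi j hj hij => ht' i hi j hj ?_⟩
  simp only [τ]
  split_ifs with hiA hjA hjA
  · have hv := hA i hiA j hjA hij
    refine Prod.Lex.toLex_lt_toLex'.2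
      ⟨Finset.sup_mono fun y hy => ?_, fun _ => WithBot.coe_lt_coe.2 hv⟩
    simp only [Finset.mem_filter] at hy ⊢
    exact ⟨hy.1, hy.2.trans hv⟩
  · obtain ⟨hjY, hv⟩ := hAout i hiA j hj hjA hij
    refine Prod.Lex.toLex_lt_toLex.2 (Or.inl (Nat.lt_succ_of_le (Finset.sup_le fun y hy => ?_)))
    rw [Finset.mem_filter] at hy
    exact hY y hy.1 j hjY (hy.2.trans hv)
  · obtain ⟨hiY, hv⟩ := hAin j hjA i hi hiA hij
    exact Prod.Lex.toLex_lt_toLex'.2 ⟨Finset.le_sup (f := (t · + 1))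
      (Finset.mem_filter.2 ⟨hiY, hv⟩), fun _ => WithBot.bot_lt_coe _⟩
  · exact Prod.Lex.toLex_lt_toLex.2 (Or.inl (Nat.succ_lt_succ (ht i hi j hj hiA hjA hij)))

variable {α γ δ κ μ : Type*} [LinearOrder κ] [LinearOrder μ]
  {col : α → γ} {row : α → δ} {colKey : α → κ} {rowKey : α → μ}

def Precedes (col : α → γ) (row : α → δ) (colKey : α → κ) (rowKey : α → μ) (i j : α) : Prop :=
  col i = col j ∧ colKey i < colKey j ∨ row i = row j ∧ rowKey i < rowKey j

theorem precedes_comm {i j : α} :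
    Precedes row col rowKey colKey i j ↔ Precedes col row colKey rowKey i j :=
  or_comm

variable [LinearOrder γ] [LinearOrder δ]
variable (hcell : ∀ i j, col i = col j → row i = row j →
  (colKey i < colKey j ↔ rowKey i < rowKey j))
include hcell

theorem exists_nat_rank_of_col {S : Finset α} {x : γ} {y : δ}
    (hxy : ∀ i ∈ S, col i = x → row i = y) (t : α → ℕ)
    (ht : ∀ i ∈ S, ∀ j ∈ S, col i ≠ x → col j ≠ x →
      Precedes col row colKey rowKey i j → t i < t j) :
    ∃ t' : α → ℕ, ∀ i ∈ S, ∀ j ∈ S, Precedes col row colKey rowKey i j → t' i < t' j := by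
  have hA : ∀ {i}, i ∈ S.filter (col · = x) ↔ i ∈ S ∧ col i = x := Finset.mem_filter
  refine exists_nat_rank_extend (A := S.filter (col · = x))
    (Y := S.filter fun j => col j ≠ x ∧ row j = y) rowKey t
    (fun i hi j hj hiA hjA => ht i hi j hj (fun h => hiA (hA.2 ⟨hi, h⟩))
      (fun h => hjA (hA.2 ⟨hj, h⟩))) ?_ ?_ ?_ ?_
  · intro i hi j hj hij
    rw [hA] at hi hj
    have hrow := (hxy i hi.1 hi.2).trans (hxy j hj.1 hj.2).symm
    exact hij.elim (fun h => (hcell i j h.1 hrow).1 h.2) And.right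
  · intro i hi j hj hjA hij
    rw [hA] at hi
    have hjx : col j ≠ x := fun h => hjA (hA.2 ⟨hj, h⟩)
    rcases hij with h | h
    · exact absurd (h.1.symm.trans hi.2) hjx
    · exact ⟨Finset.mem_filter.2 ⟨hj, hjx, h.1.symm.trans (hxy i hi.1 hi.2)⟩, h.2⟩
  · intro i hi j hj hjA hji
    rw [hA] at hi
    have hjx : col j ≠ x := fun h => hjA (hA.2 ⟨hj, h⟩)
    rcases hji with h | h
    · exact absurd (h.1.trans hi.2) hjx
    · exact ⟨Finset.mem_filter.2 ⟨hj, hjx, h.1.trans (hxy i hi.1 hi.2)⟩, h.2⟩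
  · intro i hi j hj hij
    rw [Finset.mem_filter] at hi hj
    exact ht i hi.1 j hj.1 hi.2.1 hj.2.1 (Or.inr ⟨hi.2.2.trans hj.2.2.symm, hij⟩)

theorem exists_nat_rank_of_row {S : Finset α} {x : γ} {y : δ}
    (hxy : ∀ i ∈ S, row i = y → col i = x) (t : α → ℕ)
    (ht : ∀ i ∈ S, ∀ j ∈ S, row i ≠ y → row j ≠ y →
      Precedes col row colKey rowKey i j → t i < t j) :
    ∃ t' : α → ℕ, ∀ i ∈ S, ∀ j ∈ S, Precedes col row colKey rowKey i j → t' i < t' j := by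
  simp only [← precedes_comm (col := col)] at ht ⊢
  exact exists_nat_rank_of_col (fun i j h₁ h₂ => (hcell i j h₂ h₁).symm) hxy t ht

theorem exists_nat_rank_of_isAcyclic (C : Finset (γ × δ)) (hC : (cellGraph C).IsAcyclic)
    (S : Finset α) (hS : ∀ i ∈ S, (col i, row i) ∈ C) :
    ∃ t : α → ℕ, ∀ i ∈ S, ∀ j ∈ S, Precedes col row colKey rowKey i j → t i < t j := by
  induction C using Finset.strongInduction generalizing S with
  | H C ih =>
  rcases C.eq_empty_or_nonempty with rfl | hne
  · exact ⟨0, fun i hi => absurd (hS i hi) (Finset.notMem_empty _)⟩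
  obtain ⟨X, hXC, hcol, hrow, halone⟩ := exists_cell_alone_of_isAcyclic hne hC
  have ih' := ih _ (Finset.erase_ssubset hXC) (hC.anti (cellGraph_erase_le hcol hrow))
  rcases halone with halone | halone
  · have hxy : ∀ i ∈ S, col i = X.1 → row i = X.2 := fun i hi h =>
      congrArg Prod.snd (halone _ (hS i hi) h)
    obtain ⟨t, ht⟩ := ih' (S.filter (col · ≠ X.1)) fun i hi => by
      rw [Finset.mem_filter] at hi
      exact Finset.mem_erase.2 ⟨fun h => hi.2 (congrArg Prod.fst h), hS i hi.1⟩
    exact exists_nat_rank_of_col hcell hxy t fun i hi j hj hix hjx =>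
      ht i (Finset.mem_filter.2 ⟨hi, hix⟩) j (Finset.mem_filter.2 ⟨hj, hjx⟩)
  · have hxy : ∀ i ∈ S, row i = X.2 → col i = X.1 := fun i hi h =>
      congrArg Prod.fst (halone _ (hS i hi) h)
    obtain ⟨t, ht⟩ := ih' (S.filter (row · ≠ X.2)) fun i hi => by
      rw [Finset.mem_filter] at hi
      exact Finset.mem_erase.2 ⟨fun h => hi.2 (congrArg Prod.snd h), hS i hi.1⟩
    exact exists_nat_rank_of_row hcell hxy t fun i hi j hj hiy hjy =>
      ht i (Finset.mem_filter.2 ⟨hi, hiy⟩) j (Finset.mem_filter.2 ⟨hj, hjy⟩)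

end Schedule

def orient {n : ℕ} (b : Bool) (x : Fin n) : Fin n := bif b then x else x.rev

theorem intervalicity_le_of_orient_closed {n k : ℕ} {g : Fin n → Fin k} (hg : Monotone g)
    (b : Fin k → Bool) {P : Finset (Fin n)}
    (hP : ∀ x y, g x = g y → orient (b (g x)) x < orient (b (g y)) y → y ∈ P → x ∈ P) :
    intervalicity P ≤ k := by
  refine (intervalicity_le_card P g fun a => ⟨fun x hx z hz y ⟨hxy, hyz⟩ => ?_⟩).trans_eq
    (Fintype.card_fin k)
  simp only [Finset.coe_filter, Set.mem_ofPred_eq] at hx hz ⊢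
  have hgy : g y = a := le_antisymm (hz.2 ▸ hg hyz) (hx.2 ▸ hg hxy)
  refine ⟨?_, hgy⟩
  rcases hxy.eq_or_lt with rfl | hxy
  · exact hx.1
  rcases hyz.eq_or_lt with rfl | hyz
  · exact hz.1
  cases hb : b a
  · exact hP y x (hgy.trans hx.2.symm) (by simpa [orient, hgy, hx.2, hb] using hxy) hx.1
  · exact hP y z (hgy.trans hz.2.symm) (by simpa [orient, hgy, hz.2, hb] using hyz) hz.1

theorem gridComplexity_image_le {n k l : ℕ} (π : Equiv.Perm (Fin n)) {cg : Fin n → Fin k}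
    {rg : Fin n → Fin l} (hcg : Monotone cg) (hrg : Monotone rg) (c : Fin k → Bool)
    (r : Fin l → Bool) {P : Finset (Fin n)}
    (hP : ∀ x y, Precedes cg (rg ∘ π) (fun i => orient (c (cg i)) i)
      (fun i => orient (r (rg (π i))) (π i)) x y → y ∈ P → x ∈ P) :
    gridComplexity (P.image fun i => (i, π i)) ≤ max k l := by
  have hfst : (P.image fun i => (i, π i)).image Prod.fst = P := by ext; simp
  have hsnd : (P.image fun i => (i, π i)).image Prod.snd = P.image π := by ext; simp
  rw [gridComplexity, hfst, hsnd]
  refine max_le_max ?_ ?_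
  · exact intervalicity_le_of_orient_closed hcg c fun x y h hxy hy =>
      hP x y (Or.inl ⟨h, hxy⟩) hy
  · refine intervalicity_le_of_orient_closed hrg r fun u w h huw hw => ?_
    obtain ⟨y, hy, rfl⟩ := Finset.mem_image.1 hw
    have := hP (π.symm u) y (Or.inr ⟨by simpa using h, by simpa using huw⟩) hy
    exact Finset.mem_image.2 ⟨_, this, by simp⟩

theorem prefixSet_eq_image_image {n : ℕ} (π σ : Equiv.Perm (Fin n)) (i : Fin n) :
    prefixSet π σ i = ((Finset.univ.filter (· ≤ i)).image σ).image fun j => (j, π j) := by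
  rw [Finset.image_image]
  rfl

theorem mem_image_sort_of_lt {n : ℕ} {β : Type*} [LinearOrder β] (t : Fin n → β) (i : Fin n)
    {x y : Fin n} (hxy : t x < t y)
    (hy : y ∈ (Finset.univ.filter (· ≤ i)).image (Tuple.sort t)) :
    x ∈ (Finset.univ.filter (· ≤ i)).image (Tuple.sort t) := by
  obtain ⟨b, hb, rfl⟩ := Finset.mem_image.1 hy
  refine Finset.mem_image.2 ⟨(Tuple.sort t).symm x, Finset.mem_filter.2 ⟨Finset.mem_univ _, ?_⟩,
    by simp⟩
  by_contra! h
  have := Tuple.monotone_sort t ((Finset.mem_filter.1 hb).2.trans h.le)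
  simp only [Function.comp_apply, Equiv.apply_symm_apply] at this
  exact this.not_gt hxy

theorem orient_lt_iff_of_same_cell {n k l : ℕ} {M : Fin k → Fin l → Option Bool}
    {c : Fin k → Bool} {r : Fin l → Bool} (hco : ConsistentOrientation M c r)
    {π : Equiv.Perm (Fin n)} {cg : Fin n → Fin k} {rg : Fin n → Fin l}
    (hM : ∀ i, (M (cg i) (rg (π i))).isSome)
    (hdir : ∀ i j : Fin n, i < j → cg i = cg j → rg (π i) = rg (π j) →
      ∀ b, M (cg i) (rg (π i)) = some b → (if b then π i < π j else π j < π i))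
    (i j : Fin n) (hc : cg i = cg j) (hr : rg (π i) = rg (π j)) :
    orient (c (cg i)) i < orient (c (cg j)) j ↔
      orient (r (rg (π i))) (π i) < orient (r (rg (π j))) (π j) := by
  obtain ⟨b, hb⟩ := Option.isSome_iff_exists.1 (hM i)
  have hcr := hco (cg i) (rg (π i))
  rcases lt_trichotomy i j with h | rfl | h
  · have := hdir i j h hc hr b hb
    rw [← hc, ← hr]
    cases b <;> cases hci : c (cg i) <;> cases hri : r (rg (π i)) <;>
      simp_all [orient, h.not_gt, this.not_gt]
  · simp
  · have := hdir j i h hc.symm hr.symm b (hc ▸ hr ▸ hb)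
    rw [← hc, ← hr]
    cases b <;> cases hci : c (cg i) <;> cases hri : r (rg (π i)) <;>
      simp_all [orient, h.not_gt, this.not_gt]

end PPM

/-- if a monotone gridding matrix admits a consistent orientation and its
cell graph is a forest, every permutation of `Grid(M)` has path-width at most `max k l`. -/
theorem pathwidth_le_of_forest {k l : ℕ} (M : Fin k → Fin l → Option Bool)
    (c : Fin k → Bool) (r : Fin l → Bool) (hco : ConsistentOrientation M c r)
    (hforest : (monCellGraph M).IsAcyclic)
    {n : ℕ} (π : Equiv.Perm (Fin n)) (hπ : MonGriddable M π) :
    pw π ≤ max k l := by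
  obtain ⟨cg, rg, hcg, hrg, hM, hdir⟩ := hπ
  obtain ⟨t, ht⟩ := exists_nat_rank_of_isAcyclic (col := cg) (row := rg ∘ π)
    (colKey := fun i => orient (c (cg i)) i) (rowKey := fun i => orient (r (rg (π i))) (π i))
    (orient_lt_iff_of_same_cell hco hM hdir) _ (monCellGraph_eq_cellGraph M ▸ hforest)
    Finset.univ fun i _ => by simpa using hM i
  calc pw π ≤ pwOrd π (Tuple.sort t) := pw_le_pwOrd π _
    _ ≤ max k l := Finset.sup_le fun i _ => by
      rw [prefixSet_eq_image_image]
      exact gridComplexity_image_le π hcg hrg c r fun x y hxy hy =>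
        mem_image_sort_of_lt t i (ht x (Finset.mem_univ _) y (Finset.mem_univ _) hxy) hy
end

section
/- Let M be a monotone gridding matrix whose cell graph G_M contains a cycle. Then for every p ≥ 1 there exists a monotone gridding matrix M_p such that Grid(M_p) ⊆ Grid(M) and the cell graph of M_p is a proper turning path of length at least p. -/
open PPM
/-!
A cycle of the cell graph, read off at its turning points, gives nonempty cells `u 0, u 1, …` in
which consecutive cells are distinct and alternately share a row and a column. Refine every cell of
`M` into a `(2p + 4) × (2p + 4)` block and keep, for each step `t ≤ p`, one fine cell in block
`u t`, so that steps `2i, 2i + 1` share a fine row, steps `2i - 1, 2i` share a fine column, and all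
other fine rows and columns are distinct: the cell graph of the result is a proper turning path.
The offsets wind inwards like a spiral, turning at every step in the direction prescribed by the
orientation of the block, so the fine cells kept inside one block form a chain of that block's
orientation; hence every gridding by the new matrix coarsens to a gridding by `M`.
-/

lemma Nat.exists_modEq_mem_Ico {m : ℕ} (hm : 0 < m) (i t : ℕ) :
    ∃ j ∈ Set.Ico i (i + m), j ≡ t [MOD m] := by
  have hi := Nat.mod_add_div i m
  have hi' := Nat.mod_lt i hm
  have ht := Nat.mod_lt t hm
  have hj : ∀ c, (t % m + m * c) ≡ t [MOD m] := fun c => by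
    rw [Nat.ModEq, Nat.add_mul_mod_self_left, Nat.mod_mod]
  generalize i % m = r at hi hi'
  generalize t % m = r' at ht hj
  rcases le_or_gt r r' with h | h
  · exact ⟨r' + m * (i / m), ⟨by omega, by omega⟩, hj _⟩
  · refine ⟨r' + m * (i / m + 1), ⟨?_, ?_⟩, hj _⟩ <;> rw [Nat.mul_succ] <;> omega

lemma Nat.eq_of_forall_eq_succ_of_le {β : Type*} {f : ℕ → β} {i j : ℕ} (hij : i ≤ j)
    (h : ∀ s, i ≤ s → s < j → f s = f (s + 1)) : f i = f j := by
  induction j, hij using Nat.le_induction with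
  | base => rfl
  | succ j hij ih => exact (ih fun s h₁ h₂ => h s h₁ (by omega)).trans (h j hij (by omega))

theorem Function.Periodic.exists_alternating_runs {P : ℕ → Prop} {m : ℕ}
    (hP : Function.Periodic P m) (hm : 0 < m) (htrue : ∃ t, P t) (hfalse : ∃ t, ¬ P t) :
    ∃ φ : ℕ → ℕ, ∀ t, φ t < φ (t + 1) ∧ φ (t + 1) < φ t + m ∧
      ∀ s, φ t ≤ s → s < φ (t + 1) → (P s ↔ Even t) := by
  classical
  have hrun : ∀ i, ∃ j, i < j ∧ j < i + m ∧ (P j ↔ ¬ P i) ∧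
      ∀ s, i ≤ s → s < j → (P s ↔ P i) := by
    intro i
    obtain ⟨t, ht⟩ : ∃ t, P t ↔ ¬ P i := by
      by_cases hi : P i
      · exact hfalse.imp fun t ht => by simp [ht, hi]
      · exact htrue.imp fun t ht => by simp [ht, hi]
    obtain ⟨j, ⟨hij, hjm⟩, hjt⟩ := Nat.exists_modEq_mem_Ico hm i t
    have hPj : P j ↔ ¬ P i := by rw [← hP.map_mod_nat, hjt, hP.map_mod_nat]; exact ht
    have hij' : i < j := lt_of_le_of_ne hij (by rintro rfl; tauto)
    have hex : ∃ j, i < j ∧ (P j ↔ ¬ P i) := ⟨j, hij', hPj⟩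
    refine ⟨Nat.find hex, (Nat.find_spec hex).1, (Nat.find_min' hex ⟨hij', hPj⟩).trans_lt hjm,
      (Nat.find_spec hex).2, fun s his hs => ?_⟩
    rcases his.eq_or_lt with rfl | his
    · rfl
    · have := Nat.find_min hex hs
      tauto
  choose next hnext using hrun
  obtain ⟨i₀, hi₀⟩ := htrue
  have hparity : ∀ t, P (next^[t] i₀) ↔ Even t := by
    intro t
    induction t with
    | zero => simpa using hi₀
    | succ t ih =>
      rw [Function.iterate_succ_apply', (hnext _).2.2.1, ih, Nat.even_add_one]
  refine ⟨fun t => next^[t] i₀, fun t => ?_⟩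
  simp only [Function.iterate_succ_apply']
  obtain ⟨h₁, h₂, -, h₄⟩ := hnext (next^[t] i₀)
  exact ⟨h₁, h₂, fun s hs₁ hs₂ => (h₄ s hs₁ hs₂).trans (hparity t)⟩

/-- Around the maximum, one of the two steps jumps over the other neighbour of the maximum. -/
theorem Function.Periodic.exists_strictly_between_succ {β : Type*} [LinearOrder β]
    {x : ℕ → β} {m : ℕ} (hx : Function.Periodic x m) (hm : 3 ≤ m)
    (hinj : ∀ s t, x s = x t → s ≡ t [MOD m]) :
    ∃ s t, (x t < x s ∧ x s < x (t + 1)) ∨ (x (t + 1) < x s ∧ x s < x t) := by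
  obtain ⟨t₀, -, hmax⟩ := (Finset.range m).exists_max_image x ⟨0, by simp; omega⟩
  have hle : ∀ s, x s ≤ x t₀ := fun s => by
    rw [← hx.map_mod_nat s]
    exact hmax _ (Finset.mem_range.2 (Nat.mod_lt _ (by omega)))
  have hne : ∀ s t, s < t → t < s + m → x s ≠ x t := fun s t hst hts h =>
    (hts.trans_le ((hinj s t h).add_le_of_lt hst)).false
  set a := t₀ + m - 1
  have hxa : x (a + 1) = x t₀ := by rw [show a + 1 = t₀ + m by omega, hx]
  have ha : x a < x t₀ := (hle a).lt_of_ne ((hne t₀ a (by omega) (by omega)).symm)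
  have hb : x (t₀ + 1) < x t₀ := (hle _).lt_of_ne ((hne t₀ _ (by omega) (by omega)).symm)
  rcases (hne (t₀ + 1) a (by omega) (by omega)).lt_or_gt with hab | hab
  · exact ⟨a, t₀, Or.inr ⟨hab, ha⟩⟩
  · exact ⟨t₀ + 1, a, Or.inl ⟨hab, hxa ▸ hb⟩⟩

theorem SimpleGraph.exists_periodic_adj_of_not_isAcyclic {V : Type*} {G : SimpleGraph V}
    (h : ¬ G.IsAcyclic) :
    ∃ (g : ℕ → V) (m : ℕ), 3 ≤ m ∧ Function.Periodic g m ∧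
      (∀ s t, g s = g t → s ≡ t [MOD m]) ∧ ∀ t, G.Adj (g t) (g (t + 1)) := by
  simp only [SimpleGraph.IsAcyclic, not_forall, not_not] at h
  obtain ⟨v, c, hc⟩ := h
  have hm := hc.three_le_length
  refine ⟨fun t => c.getVert (t % c.length), c.length, hm, fun t => by simp, fun s t hst => ?_,
    fun t => ?_⟩
  · exact hc.getVert_injOn' (by have := Nat.mod_lt s (by omega : 0 < c.length); simp; omega)
      (by have := Nat.mod_lt t (by omega : 0 < c.length); simp; omega) hst
  · simp only [← Nat.mod_add_mod t c.length 1]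
    have := Nat.mod_lt t (by omega : 0 < c.length)
    rcases (Nat.succ_le_of_lt this).lt_or_eq with hlt | heq
    · rw [Nat.mod_eq_of_lt hlt]
      exact c.adj_getVert_succ (by omega)
    · rw [Nat.succ_eq_add_one] at heq
      have hlast := c.adj_getVert_succ (i := t % c.length) (by omega)
      rw [heq, c.getVert_length] at hlast
      rwa [heq, Nat.mod_self, c.getVert_zero]

lemma Fin.divNat_mono {m Q : ℕ} : Monotone (Fin.divNat : Fin (m * Q) → Fin m) :=
  fun _ _ h => Nat.div_le_div_right (c := Q) h

namespace PPM

section CellGraph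

variable {k l : ℕ} {M : Fin k → Fin l → Option Bool} {p q : Fin k × Fin l}

lemma isSome_of_monCellGraph_adj (h : (monCellGraph M).Adj p q) : (M p.1 p.2).isSome := by
  rcases ((SimpleGraph.fromRel_adj _ _ _).1 h).2 with h | h
  exacts [h.1, h.2.1]

lemma snd_eq_or_fst_eq_of_monCellGraph_adj (h : (monCellGraph M).Adj p q) :
    p.2 = q.2 ∨ p.1 = q.1 := by
  rcases ((SimpleGraph.fromRel_adj _ _ _).1 h).2 with h | h <;>
    rcases h.2.2 with h | h
  exacts [.inr h.1, .inl h.1, .inr h.1.symm, .inl h.1.symm]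

lemma eq_none_of_monCellGraph_adj_of_snd_eq (h : (monCellGraph M).Adj p q) (hrow : p.2 = q.2)
    {i : Fin k} (hi : (p.1 < i ∧ i < q.1) ∨ (q.1 < i ∧ i < p.1)) : M i p.2 = none := by
  obtain ⟨hne, h | h⟩ := (SimpleGraph.fromRel_adj _ _ _).1 h
  · rcases h.2.2 with ⟨hcol, -⟩ | ⟨-, -, hempty⟩
    exacts [absurd (Prod.ext hcol hrow) hne, hempty i hi]
  · rcases h.2.2 with ⟨hcol, -⟩ | ⟨-, -, hempty⟩
    exacts [absurd (Prod.ext hcol.symm hrow) hne, hrow ▸ hempty i hi.symm]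

lemma eq_none_of_monCellGraph_adj_of_fst_eq (h : (monCellGraph M).Adj p q) (hcol : p.1 = q.1)
    {j : Fin l} (hj : (p.2 < j ∧ j < q.2) ∨ (q.2 < j ∧ j < p.2)) : M p.1 j = none := by
  obtain ⟨hne, h | h⟩ := (SimpleGraph.fromRel_adj _ _ _).1 h
  · rcases h.2.2 with ⟨-, -, hempty⟩ | ⟨hrow, -⟩
    exacts [hempty j hj, absurd (Prod.ext hcol hrow) hne]
  · rcases h.2.2 with ⟨-, -, hempty⟩ | ⟨hrow, -⟩
    exacts [hcol ▸ hempty j hj.symm, absurd (Prod.ext hcol hrow.symm) hne]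

structure IsAlternatingCellSeq (M : Fin k → Fin l → Option Bool) (u : ℕ → Fin k × Fin l) :
    Prop where
  isSome : ∀ t, (M (u t).1 (u t).2).isSome
  ne_succ : ∀ t, u t ≠ u (t + 1)
  snd_eq_succ : ∀ t, Even t → (u t).2 = (u (t + 1)).2
  fst_eq_succ : ∀ t, Odd t → (u t).1 = (u (t + 1)).1

lemma exists_snd_eq_succ_of_periodic {g : ℕ → Fin k × Fin l} {m : ℕ} (hm : 3 ≤ m)
    (hg : Function.Periodic g m) (hinj : ∀ s t, g s = g t → s ≡ t [MOD m])
    (hadj : ∀ t, (monCellGraph M).Adj (g t) (g (t + 1))) : ∃ t, (g t).2 = (g (t + 1)).2 := by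
  by_contra! hrow
  have hcol : ∀ t, (g t).1 = (g (t + 1)).1 := fun t =>
    (snd_eq_or_fst_eq_of_monCellGraph_adj (hadj t)).resolve_left (hrow t)
  have hfst : ∀ t, (g t).1 = (g 0).1 := fun t =>
    (Nat.eq_of_forall_eq_succ_of_le (f := fun t => (g t).1) t.zero_le fun s _ _ => hcol s).symm
  obtain ⟨s, t, hst⟩ := Function.Periodic.exists_strictly_between_succ (x := fun t => (g t).2)
    (fun t => by simp only [hg t]) hm
    (fun s t h => hinj s t (Prod.ext (by rw [hfst s, hfst t]) h))
  have hempty := eq_none_of_monCellGraph_adj_of_fst_eq (hadj t) (hcol t) hst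
  rw [hfst t, ← hfst s] at hempty
  simpa [hempty] using isSome_of_monCellGraph_adj (hadj s)

lemma exists_fst_eq_succ_of_periodic {g : ℕ → Fin k × Fin l} {m : ℕ} (hm : 3 ≤ m)
    (hg : Function.Periodic g m) (hinj : ∀ s t, g s = g t → s ≡ t [MOD m])
    (hadj : ∀ t, (monCellGraph M).Adj (g t) (g (t + 1))) : ∃ t, (g t).1 = (g (t + 1)).1 := by
  by_contra! hcol
  have hrow : ∀ t, (g t).2 = (g (t + 1)).2 := fun t =>
    (snd_eq_or_fst_eq_of_monCellGraph_adj (hadj t)).resolve_right (hcol t)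
  have hsnd : ∀ t, (g t).2 = (g 0).2 := fun t =>
    (Nat.eq_of_forall_eq_succ_of_le (f := fun t => (g t).2) t.zero_le fun s _ _ => hrow s).symm
  obtain ⟨s, t, hst⟩ := Function.Periodic.exists_strictly_between_succ (x := fun t => (g t).1)
    (fun t => by simp only [hg t]) hm
    (fun s t h => hinj s t (Prod.ext h (by rw [hsnd s, hsnd t])))
  have hempty := eq_none_of_monCellGraph_adj_of_snd_eq (hadj t) (hrow t) hst
  rw [hsnd t, ← hsnd s] at hempty
  simpa [hempty] using isSome_of_monCellGraph_adj (hadj s)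

/-- The turning points of a cycle of the cell graph form an alternating cell sequence. -/
theorem exists_isAlternatingCellSeq (h : ¬ (monCellGraph M).IsAcyclic) :
    ∃ u, IsAlternatingCellSeq M u := by
  obtain ⟨g, m, hm, hg, hinj, hadj⟩ := SimpleGraph.exists_periodic_adj_of_not_isAcyclic h
  have hP : Function.Periodic (fun t => (g t).2 = (g (t + 1)).2) m := fun t => by
    simp only [add_right_comm t m 1, hg t, hg (t + 1)]
  obtain ⟨φ, hφ⟩ := hP.exists_alternating_runs (by omega)
    (exists_snd_eq_succ_of_periodic hm hg hinj hadj)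
    ((exists_fst_eq_succ_of_periodic hm hg hinj hadj).imp fun t hcol hrow =>
      (hadj t).ne (Prod.ext hcol hrow))
  refine ⟨fun t => g (φ t), ⟨fun t => isSome_of_monCellGraph_adj (hadj _), fun t h => ?_,
    fun t ht => ?_, fun t ht => ?_⟩⟩
  · exact (hφ t).2.1.not_ge ((hinj _ _ h).add_le_of_lt (hφ t).1)
  · exact Nat.eq_of_forall_eq_succ_of_le (f := fun s => (g s).2) (hφ t).1.le
      fun s h₁ h₂ => ((hφ t).2.2 s h₁ h₂).2 ht
  · exact Nat.eq_of_forall_eq_succ_of_le (f := fun s => (g s).1) (hφ t).1.le fun s h₁ h₂ =>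
      (snd_eq_or_fst_eq_of_monCellGraph_adj (hadj s)).resolve_left
        fun hrow => Nat.not_even_iff_odd.2 ht (((hφ t).2.2 s h₁ h₂).1 hrow)

end CellGraph

section Staircase

variable {k l : ℕ} {M : Fin k → Fin l → Option Bool} {V : ℕ → Fin k × Fin l} {n : ℕ}

/-- The nonempty cells of `M` are `V 0, …, V n`; those sharing a row are exactly the pairs
`V (2i), V (2i + 1)`, those sharing a column exactly the pairs `V (2i - 1), V (2i)`. -/
structure IsStaircase (M : Fin k → Fin l → Option Bool) (V : ℕ → Fin k × Fin l) (n : ℕ) :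
    Prop where
  isSome_iff : ∀ q : Fin k × Fin l, (M q.1 q.2).isSome ↔ ∃ t ≤ n, V t = q
  snd_eq_iff : ∀ s ≤ n, ∀ t ≤ n, (V s).2 = (V t).2 ↔ s / 2 = t / 2
  fst_eq_iff : ∀ s ≤ n, ∀ t ≤ n, (V s).1 = (V t).1 ↔ (s + 1) / 2 = (t + 1) / 2

namespace IsStaircase

lemma injOn (h : IsStaircase M V n) {s t : ℕ} (hs : s ≤ n) (ht : t ≤ n) (hst : V s = V t) :
    s = t := by
  have h₁ := (h.snd_eq_iff s hs t ht).1 (congrArg Prod.snd hst)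
  have h₂ := (h.fst_eq_iff s hs t ht).1 (congrArg Prod.fst hst)
  omega

lemma isSome (h : IsStaircase M V n) {t : ℕ} (ht : t ≤ n) : (M (V t).1 (V t).2).isSome :=
  (h.isSome_iff _).2 ⟨t, ht, rfl⟩

lemma adj (h : IsStaircase M V n) {t : ℕ} (ht : t < n) :
    (monCellGraph M).Adj (V t) (V (t + 1)) := by
  have hne : V t ≠ V (t + 1) := fun he => by have := h.injOn ht.le ht he; omega
  have hcell : ∀ q : Fin k × Fin l, M q.1 q.2 ≠ none → ∃ s ≤ n, V s = q := fun q hq =>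
    (h.isSome_iff q).1 (Option.ne_none_iff_isSome.1 hq)
  refine (SimpleGraph.fromRel_adj _ _ _).2 ⟨hne, .inl ⟨h.isSome ht.le, h.isSome ht, ?_⟩⟩
  rcases Nat.even_or_odd' t with ⟨r, rfl | rfl⟩
  · refine .inr ⟨(h.snd_eq_iff _ ht.le _ ht).2 (by omega), fun he => ?_, fun i hi => ?_⟩
    · have := (h.fst_eq_iff _ ht.le _ ht).1 he; omega
    · by_contra hM
      obtain ⟨s, hs, hVs⟩ := hcell (i, (V (2 * r)).2) hM
      have := (h.snd_eq_iff s hs _ ht.le).1 (by rw [hVs])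
      have hi' : (V s).1 = i := by rw [hVs]
      obtain rfl | rfl : s = 2 * r ∨ s = 2 * r + 1 := by omega
      all_goals subst hi'; rcases hi with hi | hi <;> order
  · refine .inl ⟨(h.fst_eq_iff _ ht.le _ ht).2 (by omega), fun he => ?_, fun j hj => ?_⟩
    · have := (h.snd_eq_iff _ ht.le _ ht).1 he; omega
    · by_contra hM
      obtain ⟨s, hs, hVs⟩ := hcell ((V (2 * r + 1)).1, j) hM
      have := (h.fst_eq_iff s hs _ ht.le).1 (by rw [hVs])
      have hj' : (V s).2 = j := by rw [hVs]
      obtain rfl | rfl : s = 2 * r + 1 ∨ s = 2 * r + 2 := by omega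
      all_goals subst hj'; rcases hj with hj | hj <;> order

lemma succ_eq_or_eq_succ_of_adj (h : IsStaircase M V n) {s t : ℕ} (hs : s ≤ n) (ht : t ≤ n)
    (hadj : (monCellGraph M).Adj (V s) (V t)) : t = s + 1 ∨ s = t + 1 := by
  have hst : s ≠ t := by rintro rfl; exact hadj.ne rfl
  rcases snd_eq_or_fst_eq_of_monCellGraph_adj hadj with he | he
  · have := (h.snd_eq_iff s hs t ht).1 he; omega
  · have := (h.fst_eq_iff s hs t ht).1 he; omega

lemma properTurning (h : IsStaircase M V n) : ProperTurning ((List.range (n + 1)).map V) := by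
  intro a b c habc
  obtain ⟨i, hi, hget⟩ := List.infix_iff_getElem?.1 habc
  simp only [List.length_cons, List.length_nil, List.length_map, List.length_range] at hi
  have hL : ∀ j < 3, ((List.range (n + 1)).map V)[j + i]? = some (V (j + i)) := fun j hj => by
    simp [List.getElem?_range (by omega : j + i < n + 1)]
  have ha := (hL 0 (by omega)).symm.trans (hget 0 (by simp))
  have hb := (hL 1 (by omega)).symm.trans (hget 1 (by simp))
  have hc := (hL 2 (by omega)).symm.trans (hget 2 (by simp))
  simp only [Option.some.injEq, List.getElem_cons_zero, List.getElem_cons_succ] at ha hb hc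
  subst ha hb hc
  constructor
  · rintro ⟨h₁, h₂⟩
    have := (h.fst_eq_iff _ (by omega) _ (by omega)).1 h₁
    have := (h.fst_eq_iff _ (by omega) _ (by omega)).1 h₂
    omega
  · rintro ⟨h₁, h₂⟩
    have := (h.snd_eq_iff _ (by omega) _ (by omega)).1 h₁
    have := (h.snd_eq_iff _ (by omega) _ (by omega)).1 h₂
    omega

theorem exists_walk (h : IsStaircase M V n) :
    ∃ (u v : Fin k × Fin l) (w : (monCellGraph M).Walk u v),
      w.IsPath ∧ w.length = n ∧ ProperTurning w.support ∧
      (∀ q : Fin k × Fin l, (M q.1 q.2).isSome → q ∈ w.support) ∧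
      (∀ e ∈ (monCellGraph M).edgeSet, e ∈ w.edges) := by
  set L := (List.range (n + 1)).map V
  have hchain : L.IsChain (monCellGraph M).Adj := by
    rw [List.isChain_map, List.isChain_range]
    exact fun t ht => h.adj (by omega)
  set w := SimpleGraph.Walk.ofSupport L (by simp [L]) hchain
  have hsupp : w.support = L := SimpleGraph.Walk.support_ofSupport _ _
  have hlen : w.length = n := by simp [w, L]
  have hvert : ∀ t ≤ n, w.getVert t = V t := fun t ht => by
    simp [w.getVert_eq_support_getElem (hlen ▸ ht), hsupp, L]
  refine ⟨_, _, w, ?_, hlen, ?_, fun q hq => ?_, fun e he => ?_⟩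
  · rw [SimpleGraph.Walk.isPath_def, hsupp]
    refine List.Nodup.map_on (fun s hs t ht hst => ?_) List.nodup_range
    exact h.injOn (by simp at hs; omega) (by simp at ht; omega) hst
  · rw [hsupp]
    exact h.properTurning
  · obtain ⟨t, ht, rfl⟩ := (h.isSome_iff q).1 hq
    rw [hsupp]
    exact List.mem_map.2 ⟨t, List.mem_range.2 (by omega), rfl⟩
  · induction e using Sym2.ind with
    | _ x y =>
    have hxy := (SimpleGraph.mem_edgeSet _).1 he
    obtain ⟨s, hs, rfl⟩ := (h.isSome_iff x).1 (isSome_of_monCellGraph_adj hxy)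
    obtain ⟨t, ht, rfl⟩ := (h.isSome_iff y).1 (isSome_of_monCellGraph_adj hxy.symm)
    rw [SimpleGraph.Walk.mk_mem_edges_iff_exists]
    rcases h.succ_eq_or_eq_succ_of_adj hs ht hxy with rfl | rfl
    · exact ⟨s, by omega, by rw [hvert s hs, hvert _ ht]⟩
    · exact ⟨t, by omega, by rw [hvert t ht, hvert _ hs, Sym2.eq_swap]⟩

end IsStaircase

end Staircase

section Refinement

variable {k l Q : ℕ}

noncomputable def refineOn (M : Fin k → Fin l → Option Bool)
    (S : Set (Fin (k * Q) × Fin (l * Q))) : Fin (k * Q) → Fin (l * Q) → Option Bool :=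
  open Classical in fun x y => if (x, y) ∈ S then M x.divNat y.divNat else none

lemma refineOn_of_mem {M : Fin k → Fin l → Option Bool} {S : Set (Fin (k * Q) × Fin (l * Q))}
    {x : Fin (k * Q)} {y : Fin (l * Q)} (h : (x, y) ∈ S) :
    refineOn M S x y = M x.divNat y.divNat := if_pos h

lemma mem_of_isSome_refineOn {M : Fin k → Fin l → Option Bool}
    {S : Set (Fin (k * Q) × Fin (l * Q))} {x : Fin (k * Q)} {y : Fin (l * Q)}
    (h : (refineOn M S x y).isSome) : (x, y) ∈ S := by
  by_contra hS
  simp [refineOn, hS] at h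

theorem MonGriddable.of_refineOn {M : Fin k → Fin l → Option Bool}
    {S : Set (Fin (k * Q) × Fin (l * Q))}
    (hS : ∀ x y x' y', (x, y) ∈ S → (x', y') ∈ S → x.divNat = x'.divNat →
      y.divNat = y'.divNat → x ≤ x' → (x, y) ≠ (x', y') →
      ∀ b, M x.divNat y.divNat = some b → if b then y < y' else y' < y)
    {n : ℕ} {π : Equiv.Perm (Fin n)} (h : MonGriddable (refineOn M S) π) :
    MonGriddable M π := by
  obtain ⟨c, r, hc, hr, hsome, hdir⟩ := h
  refine ⟨fun i => (c i).divNat, fun v => (r v).divNat, Fin.divNat_mono.comp hc,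
    Fin.divNat_mono.comp hr, fun i => ?_, fun i j hij hcij hrij b hb => ?_⟩
  · rw [← refineOn_of_mem (M := M) (mem_of_isSome_refineOn (hsome i))]
    exact hsome i
  by_cases hcell : (c i, r (π i)) = (c j, r (π j))
  · obtain ⟨hc', hr'⟩ := Prod.mk.inj hcell
    rw [← refineOn_of_mem (M := M) (mem_of_isSome_refineOn (hsome i))] at hb
    exact hdir i j hij hc' hr' b hb
  · have := hS _ _ _ _ (mem_of_isSome_refineOn (hsome i)) (mem_of_isSome_refineOn (hsome j))
      hcij hrij (hc hij.le) hcell b hb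
    cases b <;> exact hr.reflect_lt this

end Refinement

section FineIndex

variable {m Q : ℕ} [NeZero Q]

/-- The fine index at offset `i` (reduced mod `Q`) of block `a`. -/
def fineIndex (a : Fin m) (i : ℕ) : Fin (m * Q) := finProdFinEquiv (a, Fin.ofNat Q i)

lemma fineIndex_divNat (a : Fin m) (i : ℕ) : (fineIndex (Q := Q) a i).divNat = a := by
  have := congrArg Prod.fst (finProdFinEquiv.symm_apply_apply (a, Fin.ofNat Q i))
  rwa [finProdFinEquiv_symm_apply] at this

lemma fineIndex_eq_fineIndex_iff {a b : Fin m} {i j : ℕ} (hi : i < Q) (hj : j < Q) :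
    fineIndex (Q := Q) a i = fineIndex b j ↔ a = b ∧ i = j := by
  simp only [fineIndex, Equiv.apply_eq_iff_eq, Prod.mk.injEq, Fin.ext_iff (a := Fin.ofNat Q i),
    Fin.val_ofNat, Nat.mod_eq_of_lt hi, Nat.mod_eq_of_lt hj]

lemma fineIndex_lt_fineIndex_iff {a : Fin m} {i j : ℕ} (hi : i < Q) (hj : j < Q) :
    fineIndex (Q := Q) a i < fineIndex a j ↔ i < j := by
  simp only [Fin.lt_def, fineIndex, finProdFinEquiv_apply_val, Fin.val_ofNat,
    Nat.mod_eq_of_lt hi, Nat.mod_eq_of_lt hj]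
  omega

end FineIndex

section Spiral

variable (σ : ℕ → Bool) (n : ℕ)

/-- Whether the spiral passes level `j` on the low side of its block; the recursion makes the
spiral turn consistently with the orientation `σ j` of the block it visits at step `j`. -/
def spiralBit : ℕ → Bool
  | 0 => true
  | j + 1 => spiralBit j == σ j

/-- Step `t` of the spiral uses level `colLevel t` for its column offset and `rowLevel t` for its
row offset; steps `2i, 2i + 1` share a row level and steps `2i - 1, 2i` a column level. -/
def colLevel (t : ℕ) : ℕ := 2 * ((t + 1) / 2)

def rowLevel (t : ℕ) : ℕ := 2 * (t / 2) + 1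

/-- Levels `0, …, n + 1` are placed at offsets `j` or `2n + 3 - j` of `Fin (2n + 4)`, so that
every later level lies strictly between the two possible offsets of an earlier one. -/
def spiralOffset (j : ℕ) : ℕ := if spiralBit σ j then j else 2 * n + 3 - j

lemma spiralBit_colLevel (t : ℕ) :
    spiralBit σ (colLevel t) = (spiralBit σ (rowLevel t) == σ t) := by
  rcases Nat.even_or_odd' t with ⟨r, rfl | rfl⟩
  · rw [show colLevel (2 * r) = 2 * r by unfold colLevel; omega,
      show rowLevel (2 * r) = 2 * r + 1 by unfold rowLevel; omega, spiralBit]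
    cases spiralBit σ (2 * r) <;> cases σ (2 * r) <;> rfl
  · rw [show colLevel (2 * r + 1) = 2 * r + 1 + 1 by unfold colLevel; omega,
      show rowLevel (2 * r + 1) = 2 * r + 1 by unfold rowLevel; omega, spiralBit]

variable {σ n}

lemma colLevel_le {t : ℕ} (ht : t ≤ n) : colLevel t ≤ n + 1 := by unfold colLevel; omega

lemma rowLevel_le {t : ℕ} (ht : t ≤ n) : rowLevel t ≤ n + 1 := by unfold rowLevel; omega

lemma spiralOffset_lt {j : ℕ} (hj : j ≤ n + 1) : spiralOffset σ n j < 2 * n + 4 := by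
  unfold spiralOffset; split_ifs <;> omega

lemma spiralOffset_inj {j j' : ℕ} (hj : j ≤ n + 1) (hj' : j' ≤ n + 1) :
    spiralOffset σ n j = spiralOffset σ n j' ↔ j = j' := by
  refine ⟨fun h => ?_, congrArg _⟩
  unfold spiralOffset at h
  split_ifs at h <;> omega

lemma spiralOffset_lt_spiralOffset_iff {j j' : ℕ} (h : j < j') (h' : j' ≤ n + 1) :
    spiralOffset σ n j < spiralOffset σ n j' ↔ spiralBit σ j = true := by
  unfold spiralOffset
  cases spiralBit σ j <;> cases spiralBit σ j' <;> simp <;> omega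

lemma spiralOffset_colLevel_lt_iff_of_lt {s t : ℕ} (hst : s + 2 ≤ t) (ht : t ≤ n) :
    spiralOffset σ n (colLevel s) < spiralOffset σ n (colLevel t) ↔
      (spiralOffset σ n (rowLevel s) < spiralOffset σ n (rowLevel t) ↔ σ s = true) := by
  rw [spiralOffset_lt_spiralOffset_iff (by unfold colLevel; omega) (colLevel_le ht),
    spiralOffset_lt_spiralOffset_iff (by unfold rowLevel; omega) (rowLevel_le ht),
    spiralBit_colLevel]
  cases spiralBit σ (rowLevel s) <;> cases σ s <;> simp

lemma spiralOffset_colLevel_lt_iff {s t : ℕ} (hst : s + 2 ≤ t ∨ t + 2 ≤ s) (hs : s ≤ n)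
    (ht : t ≤ n) (hσ : σ s = σ t) :
    spiralOffset σ n (colLevel s) < spiralOffset σ n (colLevel t) ↔
      (spiralOffset σ n (rowLevel s) < spiralOffset σ n (rowLevel t) ↔ σ s = true) := by
  rcases hst with hst | hst
  · exact spiralOffset_colLevel_lt_iff_of_lt hst ht
  have key := spiralOffset_colLevel_lt_iff_of_lt (σ := σ) hst hs
  have hcol := (spiralOffset_inj (σ := σ) (colLevel_le hs) (colLevel_le ht)).not.2
    (by unfold colLevel; omega)
  have hrow := (spiralOffset_inj (σ := σ) (rowLevel_le hs) (rowLevel_le ht)).not.2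
    (by unfold rowLevel; omega)
  have hflip : ∀ a b : ℕ, a ≠ b → (a < b ↔ ¬ b < a) := fun a b hab =>
    ⟨fun h => not_lt.2 h.le, fun h => lt_of_le_of_ne (not_lt.1 h) hab⟩
  rw [hflip _ _ hcol, hflip _ _ hrow, key, hσ]
  tauto

end Spiral

section SpiralMatrix

variable {k l : ℕ} (M : Fin k → Fin l → Option Bool) (u : ℕ → Fin k × Fin l) (n : ℕ)

def blockSign (t : ℕ) : Bool := (M (u t).1 (u t).2).getD false

def spiralCell (t : ℕ) : Fin (k * (2 * n + 4)) × Fin (l * (2 * n + 4)) :=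
  (fineIndex (u t).1 (spiralOffset (blockSign M u) n (colLevel t)),
    fineIndex (u t).2 (spiralOffset (blockSign M u) n (rowLevel t)))

noncomputable def spiralMatrix : Fin (k * (2 * n + 4)) → Fin (l * (2 * n + 4)) → Option Bool :=
  refineOn M (spiralCell M u n '' Set.Iic n)

variable {M u n}

namespace IsAlternatingCellSeq

lemma snd_eq_of_div_two_eq (hu : IsAlternatingCellSeq M u) {s t : ℕ} (h : s / 2 = t / 2) :
    (u s).2 = (u t).2 := by
  rcases Nat.even_or_odd' s with ⟨r, rfl | rfl⟩ <;>
    obtain rfl | rfl : t = 2 * r ∨ t = 2 * r + 1 := by omega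
  · rfl
  · exact hu.snd_eq_succ _ (even_two_mul r)
  · exact (hu.snd_eq_succ _ (even_two_mul r)).symm
  · rfl

lemma fst_eq_of_succ_div_two_eq (hu : IsAlternatingCellSeq M u) {s t : ℕ}
    (h : (s + 1) / 2 = (t + 1) / 2) : (u s).1 = (u t).1 := by
  rcases Nat.even_or_odd' s with ⟨r, rfl | rfl⟩
  · obtain rfl | ht : t = 2 * r ∨ t + 1 = 2 * r := by omega
    · rfl
    · exact (ht ▸ hu.fst_eq_succ t ⟨r - 1, by omega⟩).symm
  · obtain rfl | rfl : t = 2 * r + 1 ∨ t = 2 * r + 1 + 1 := by omega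
    · rfl
    · exact hu.fst_eq_succ _ (odd_two_mul_add_one r)

lemma add_two_le_or_add_two_le (hu : IsAlternatingCellSeq M u) {s t : ℕ} (hut : u s = u t)
    (hst : s ≠ t) : s + 2 ≤ t ∨ t + 2 ≤ s := by
  have h₁ : t ≠ s + 1 := by rintro rfl; exact hu.ne_succ s hut
  have h₂ : s ≠ t + 1 := by rintro rfl; exact hu.ne_succ t hut.symm
  omega

end IsAlternatingCellSeq

theorem isStaircase_spiralMatrix (hu : IsAlternatingCellSeq M u) :
    IsStaircase (spiralMatrix M u n) (spiralCell M u n) n where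
  isSome_iff q := by
    refine ⟨fun h => mem_of_isSome_refineOn h, ?_⟩
    rintro ⟨t, ht, rfl⟩
    have hmem : ((spiralCell M u n t).1, (spiralCell M u n t).2) ∈
        spiralCell M u n '' Set.Iic n := ⟨t, ht, rfl⟩
    rw [spiralMatrix, refineOn_of_mem hmem]
    simpa only [spiralCell, fineIndex_divNat] using hu.isSome t
  snd_eq_iff s hs t ht := by
    rw [spiralCell, spiralCell, fineIndex_eq_fineIndex_iff (spiralOffset_lt (rowLevel_le hs))
      (spiralOffset_lt (rowLevel_le ht)), spiralOffset_inj (rowLevel_le hs) (rowLevel_le ht)]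
    unfold rowLevel
    exact ⟨fun h => by have := h.2; omega, fun h => ⟨hu.snd_eq_of_div_two_eq h, by omega⟩⟩
  fst_eq_iff s hs t ht := by
    rw [spiralCell, spiralCell, fineIndex_eq_fineIndex_iff (spiralOffset_lt (colLevel_le hs))
      (spiralOffset_lt (colLevel_le ht)), spiralOffset_inj (colLevel_le hs) (colLevel_le ht)]
    unfold colLevel
    exact ⟨fun h => by have := h.2; omega,
      fun h => ⟨hu.fst_eq_of_succ_div_two_eq h, by omega⟩⟩

theorem MonGriddable.of_spiralMatrix (hu : IsAlternatingCellSeq M u) {m : ℕ}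
    {π : Equiv.Perm (Fin m)} (h : MonGriddable (spiralMatrix M u n) π) : MonGriddable M π := by
  refine MonGriddable.of_refineOn ?_ h
  rintro _ _ _ _ ⟨s, hs, hsxy⟩ ⟨t, ht, htxy⟩ hx hy hle hne b hb
  obtain ⟨rfl, rfl⟩ := Prod.ext_iff.1 hsxy
  obtain ⟨rfl, rfl⟩ := Prod.ext_iff.1 htxy
  simp only [spiralCell, fineIndex_divNat] at hx hy hle hne hb ⊢
  have hut : u s = u t := Prod.ext hx hy
  have hst := hu.add_two_le_or_add_two_le hut (by rintro rfl; exact hne rfl)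
  have key := spiralOffset_colLevel_lt_iff (σ := blockSign M u) hst hs ht
    (by simp [blockSign, hut])
  have hsign : blockSign M u s = b := by simp [blockSign, hb]
  rw [hut] at hle ⊢
  have hcol := (spiralOffset_inj (σ := blockSign M u) (colLevel_le hs) (colLevel_le ht)).not.2
    (by unfold colLevel; omega)
  have hrow := (spiralOffset_inj (σ := blockSign M u) (rowLevel_le hs) (rowLevel_le ht)).not.2
    (by unfold rowLevel; omega)
  rw [← not_lt, fineIndex_lt_fineIndex_iff (spiralOffset_lt (colLevel_le ht))
    (spiralOffset_lt (colLevel_le hs)), not_lt] at hle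
  have hrowlt := key.1 (lt_of_le_of_ne hle hcol)
  rw [hsign] at hrowlt
  rw [fineIndex_lt_fineIndex_iff (spiralOffset_lt (rowLevel_le hs))
      (spiralOffset_lt (rowLevel_le ht)), fineIndex_lt_fineIndex_iff
      (spiralOffset_lt (rowLevel_le ht)) (spiralOffset_lt (rowLevel_le hs))]
  cases b
  · simp only [Bool.false_eq_true, iff_false, if_false] at hrowlt ⊢
    omega
  · simpa using hrowlt

end SpiralMatrix

end PPM

theorem exists_proper_turning_path_subclass_general {k l : ℕ} (M : Fin k → Fin l → Option Bool)
    (hcyc : ¬ (monCellGraph M).IsAcyclic) (p : ℕ) :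
    ∃ (k' l' : ℕ) (M' : Fin k' → Fin l' → Option Bool),
      (∀ (n : ℕ) (π : Equiv.Perm (Fin n)), MonGriddable M' π → MonGriddable M π) ∧
      ∃ (u v : Fin k' × Fin l') (w : (monCellGraph M').Walk u v),
        w.IsPath ∧ p ≤ w.length ∧ ProperTurning w.support ∧
        (∀ q : Fin k' × Fin l', (M' q.1 q.2).isSome → q ∈ w.support) ∧
        (∀ e ∈ (monCellGraph M').edgeSet, e ∈ w.edges) := by
  obtain ⟨u, hu⟩ := exists_isAlternatingCellSeq hcyc
  obtain ⟨a, b, w, hpath, hlen, hturn, hcells, hedges⟩ :=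
    (isStaircase_spiralMatrix (n := p) hu).exists_walk
  exact ⟨_, _, spiralMatrix M u p, fun _ _ => MonGriddable.of_spiralMatrix hu, a, b, w, hpath,
    hlen.ge, hturn, hcells, hedges⟩

/-- if the cell graph of a monotone gridding matrix `M` contains a cycle,
then for every `p ≥ 1` there is a monotone gridding matrix `M_p` with
`Grid(M_p) ⊆ Grid(M)` whose cell graph is a proper turning path of length ≥ p. -/
theorem exists_proper_turning_path_subclass {k l : ℕ} (M : Fin k → Fin l → Option Bool)
    (hcyc : ¬ (monCellGraph M).IsAcyclic) (p : ℕ) (hp : 1 ≤ p) :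
    ∃ (k' l' : ℕ) (M' : Fin k' → Fin l' → Option Bool),
      (∀ (n : ℕ) (π : Equiv.Perm (Fin n)), MonGriddable M' π → MonGriddable M π) ∧
      ∃ (u v : Fin k' × Fin l') (w : (monCellGraph M').Walk u v),
        w.IsPath ∧ p ≤ w.length ∧ ProperTurning w.support ∧
        (∀ q : Fin k' × Fin l', (M' q.1 q.2).isSome → q ∈ w.support) ∧
        (∀ e ∈ (monCellGraph M').edgeSet, e ∈ w.edges) :=
  exists_proper_turning_path_subclass_general M hcyc p
end

section
/- For a permutation class C, the following are equivalent: (a) C has unbounded horizontal path-width; (b) C contains arbitrarily large horizontal alternations; (c) C contains a horizontal monotone juxtaposition Grid(D₁ D₂) with D₁, D₂ ∈ {Inc, Dec} as a subclass. -/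
open PPM

section ErdosSzekeres

open Finset

variable {α β : Type*} [LinearOrder α] [LinearOrder β] {g : α → β} {s : Finset α}

open scoped Classical in
noncomputable def increasingEndingAt (s : Finset α) (g : α → β) (i : α) :
    Finset (Finset α) :=
  s.powerset.filter fun u : Finset α =>
    i ∈ u ∧ (∀ x ∈ u, x ≤ i) ∧ StrictMonoOn g (u : Set α)

lemma mem_increasingEndingAt {u : Finset α} {i : α} : u ∈ increasingEndingAt s g i ↔
    u ⊆ s ∧ i ∈ u ∧ (∀ x ∈ u, x ≤ i) ∧ StrictMonoOn g (u : Set α) := by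
  classical
  simp [increasingEndingAt]

noncomputable def longestIncreasingAt (s : Finset α) (g : α → β) (i : α) : ℕ :=
  (increasingEndingAt s g i).sup card

lemma exists_strictMonoOn_of_lt_longestIncreasingAt {i : α} {a : ℕ}
    (h : a < longestIncreasingAt s g i) :
    ∃ u ⊆ s, a < u.card ∧ StrictMonoOn g (u : Set α) := by
  obtain ⟨u, hu, hau⟩ := Finset.lt_sup_iff.mp h
  obtain ⟨hus, -, -, hmono⟩ := mem_increasingEndingAt.mp hu
  exact ⟨u, hus, hau, hmono⟩

lemma longestIncreasingAt_lt {i j : α} (hi : i ∈ s) (hj : j ∈ s) (hij : i < j)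
    (hg : g i < g j) : longestIncreasingAt s g i < longestIncreasingAt s g j := by
  obtain ⟨u, hu, hmax⟩ := exists_mem_eq_sup (increasingEndingAt s g i)
    ⟨{i}, mem_increasingEndingAt.mpr ⟨by simpa using hi, by simp, by simp, by simp⟩⟩ card
  obtain ⟨hus, hiu, hui, hgu⟩ := mem_increasingEndingAt.mp hu
  have hju : j ∉ u := fun h => (hui j h).not_gt hij
  have hmono : StrictMonoOn g (insert j u : Set α) := by
    rintro x (rfl | hx) y (rfl | hy) hxy
    · exact absurd hxy (lt_irrefl _)
    · exact absurd ((hui y hy).trans_lt hij) hxy.not_gt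
    · exact (hgu.monotoneOn hx hiu (hui x hx)).trans_lt hg
    · exact hgu hx hy hxy
  have hmem : insert j u ∈ increasingEndingAt s g j := mem_increasingEndingAt.mpr
    ⟨insert_subset hj hus, mem_insert_self j u,
      fun x hx => (mem_insert.mp hx).elim le_of_eq fun hx => (hui x hx).trans hij.le,
      by simpa using hmono⟩
  calc longestIncreasingAt s g i = u.card := hmax
    _ < (insert j u).card := by rw [card_insert_of_notMem hju]; omega
    _ ≤ longestIncreasingAt s g j := le_sup (f := card) hmem

/-- Erdős–Szekeres. -/
theorem exists_strictMonoOn_or_strictAntiOn (hg : Set.InjOn g s) {a b : ℕ}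
    (h : a * b < s.card) :
    ∃ u ⊆ s, (a < u.card ∧ StrictMonoOn g (u : Set α)) ∨
      (b < u.card ∧ StrictAntiOn g (u : Set α)) := by
  classical
  by_contra hno
  push Not at hno
  -- `longestIncreasingAt` maps `s` into `[1, a]`, and each of its fibres is decreasing
  have hmaps : ∀ i ∈ s, longestIncreasingAt s g i ∈ Icc 1 a := fun i hi => by
    refine mem_Icc.mpr ⟨?_, not_lt.mp fun hlt => ?_⟩
    · exact le_sup (f := card) (mem_increasingEndingAt.mpr
        ⟨singleton_subset_iff.mpr hi, mem_singleton_self i, by simp, by simp⟩)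
    · obtain ⟨u, hus, hau, hmono⟩ := exists_strictMonoOn_of_lt_longestIncreasingAt hlt
      exact (hno u hus).1 hau hmono
  obtain ⟨ℓ, -, hfib⟩ :=
    exists_lt_card_fiber_of_mul_lt_card_of_maps_to hmaps (by simpa using h)
  refine (hno _ (filter_subset _ s)).2 hfib fun x hx y hy hxy => ?_
  simp only [coe_filter, Set.mem_ofPred_eq] at hx hy
  refine (le_of_not_gt fun hgxy => ?_).lt_of_ne fun he => hxy.ne (hg hx.1 hy.1 he.symm)
  exact (longestIncreasingAt_lt hx.1 hy.1 hxy hgxy).ne (hx.2.trans hy.2.symm)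

end ErdosSzekeres

namespace PPM

noncomputable section

open Finset

variable {n : ℕ}

def IsIntervalPartition (A : Finset (Fin n)) (F : Finset (Finset (Fin n))) : Prop :=
  (∀ I ∈ F, ∃ a b : Fin n, I = Icc a b) ∧
    (F : Set (Finset (Fin n))).PairwiseDisjoint id ∧ F.sup id = A

lemma intervalicity_le_card_s6 {A : Finset (Fin n)} {F : Finset (Finset (Fin n))}
    (hF : IsIntervalPartition A F) : intervalicity A ≤ F.card :=
  Nat.sInf_le ⟨F, rfl, hF⟩

lemma IsIntervalPartition.subset {A : Finset (Fin n)} {F : Finset (Finset (Fin n))}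
    (hF : IsIntervalPartition A F) {I : Finset (Fin n)} (hI : I ∈ F) : I ⊆ A :=
  hF.2.2 ▸ le_sup (f := id) hI

lemma IsIntervalPartition.exists_mem {A : Finset (Fin n)} {F : Finset (Finset (Fin n))}
    (hF : IsIntervalPartition A F) {v : Fin n} (hv : v ∈ A) : ∃ I ∈ F, v ∈ I := by
  rw [← hF.2.2] at hv
  simpa using mem_sup.mp hv

lemma intervalicity_Iic_le_one (i : Fin n) : intervalicity (Iic i) ≤ 1 := by
  have : NeZero n := ⟨i.pos.ne'⟩
  refine (intervalicity_le_card_s6 (F := {Icc 0 i}) ⟨?_, ?_, ?_⟩).trans_eq rfl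
  · simp
  · simp
  · ext; simp

open scoped Classical in
def runStarts (A : Finset (Fin n)) : Finset (Fin n) :=
  A.filter fun v => IsMin v ∨ Order.pred v ∉ A

lemma mem_runStarts {A : Finset (Fin n)} {v : Fin n} :
    v ∈ runStarts A ↔ v ∈ A ∧ (IsMin v ∨ Order.pred v ∉ A) := by
  classical
  simp [runStarts]

def runEnd (A : Finset (Fin n)) (s : Fin n) : Fin n :=
  if hs : s ∈ A then (A.filter fun b => Icc s b ⊆ A).max'
    ⟨s, mem_filter.mpr ⟨hs, by simpa using hs⟩⟩ else s

lemma Icc_runEnd_subset {A : Finset (Fin n)} {s : Fin n} (hs : s ∈ A) :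
    Icc s (runEnd A s) ⊆ A := by
  rw [runEnd, dif_pos hs]
  exact (mem_filter.mp (max'_mem (A.filter fun b => Icc s b ⊆ A) _)).2

lemma le_runEnd {A : Finset (Fin n)} {s b : Fin n} (hs : s ∈ A) (hsb : s ≤ b)
    (hb : Icc s b ⊆ A) : b ≤ runEnd A s := by
  rw [runEnd, dif_pos hs]
  exact le_max' _ _ (mem_filter.mpr ⟨hb (right_mem_Icc.mpr hsb), hb⟩)

/-- The least `s` with `[s, v] ⊆ A` starts a run. -/
lemma exists_mem_runStarts_Icc_subset {A : Finset (Fin n)} {v : Fin n} (hv : v ∈ A) :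
    ∃ s ∈ runStarts A, s ≤ v ∧ Icc s v ⊆ A := by
  have hvS : v ∈ A.filter fun t => Icc t v ⊆ A := mem_filter.mpr ⟨hv, by simpa using hv⟩
  obtain ⟨hsS, hleast⟩ := isLeast_min' _ ⟨v, hvS⟩
  set s := (A.filter fun t => Icc t v ⊆ A).min' ⟨v, hvS⟩
  obtain ⟨hsA, hsv⟩ := mem_filter.mp hsS
  refine ⟨s, mem_runStarts.mpr ⟨hsA, or_iff_not_imp_left.mpr fun hmin hpred => ?_⟩,
    hleast hvS, hsv⟩
  have hIcc : Icc (Order.pred s) v ⊆ A := fun x hx => by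
    rcases (mem_Icc.mp hx).1.eq_or_lt with rfl | hlt
    · exact hpred
    · exact hsv (mem_Icc.mpr ⟨Order.le_of_pred_lt hlt, (mem_Icc.mp hx).2⟩)
  exact (Order.pred_lt_of_not_isMin hmin).not_ge (hleast (mem_filter.mpr ⟨hpred, hIcc⟩))

lemma isIntervalPartition_runs (A : Finset (Fin n)) :
    IsIntervalPartition A ((runStarts A).image fun s => Icc s (runEnd A s)) := by
  refine ⟨by simp, ?_, ?_⟩
  · -- if two runs met, the predecessor of the later start would lie in the earlier run
    have key : ∀ s ∈ runStarts A, ∀ s' ∈ runStarts A, s < s' →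
        Disjoint (Icc s (runEnd A s)) (Icc s' (runEnd A s')) := by
      intro s hs s' hs' hlt
      refine disjoint_left.mpr fun x hx hx' => ?_
      have hmin : ¬ IsMin s' := not_isMin_of_lt hlt
      refine (mem_runStarts.mp hs').2.resolve_left hmin (Icc_runEnd_subset (mem_runStarts.mp hs).1
        (mem_Icc.mpr ⟨Order.le_pred_of_lt hlt, ?_⟩))
      exact ((Order.pred_lt_of_not_isMin hmin).trans_le
        ((mem_Icc.mp hx').1.trans (mem_Icc.mp hx).2)).le
    simp only [coe_image]
    rintro _ ⟨s, hs, rfl⟩ _ ⟨s', hs', rfl⟩ hne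
    rcases lt_trichotomy s s' with hlt | rfl | hlt
    · exact key s hs s' hs' hlt
    · exact absurd rfl hne
    · exact (key s' hs' s hs hlt).symm
  · ext v
    simp only [mem_sup, mem_image, id]
    constructor
    · rintro ⟨_, ⟨s, hs, rfl⟩, hv⟩
      exact Icc_runEnd_subset (mem_runStarts.mp hs).1 hv
    · intro hv
      obtain ⟨s, hs, hsv, hIcc⟩ := exists_mem_runStarts_Icc_subset hv
      exact ⟨_, ⟨s, hs, rfl⟩,
        mem_Icc.mpr ⟨hsv, le_runEnd (mem_runStarts.mp hs).1 hsv hIcc⟩⟩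

lemma intervalicity_le_card_runStarts (A : Finset (Fin n)) :
    intervalicity A ≤ (runStarts A).card :=
  (intervalicity_le_card_s6 (isIntervalPartition_runs A)).trans card_image_le

lemma exists_isIntervalPartition_card_eq (A : Finset (Fin n)) :
    ∃ F, IsIntervalPartition A F ∧ F.card = intervalicity A := by
  obtain ⟨F, hcard, hF⟩ :=
    Nat.sInf_mem (s := {m | ∃ F, F.card = m ∧ IsIntervalPartition A F})
      ⟨_, _, rfl, isIntervalPartition_runs A⟩
  exact ⟨F, hF, hcard⟩

/-- Each interval of a partition of `A` contains at most one point of `A`. -/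
lemma card_le_intervalicity {A : Finset (Fin n)} (hA : ∀ v ∈ A, ∀ w ∈ A, ¬ v ⋖ w) :
    A.card ≤ intervalicity A := by
  obtain ⟨F, hF, hcard⟩ := exists_isIntervalPartition_card_eq A
  refine hcard ▸ card_le_card_of_forall_subsingleton (· ∈ ·)
    (fun v hv => hF.exists_mem hv) fun I hI => ?_
  obtain ⟨a, b, rfl⟩ := hF.1 I hI
  have hsub := hF.subset hI
  have key : ∀ v ∈ Icc a b, ∀ w ∈ Icc a b, ¬ v < w := fun v hv w hw hvw => by
    refine hA v (hsub hv) (Order.succ v) (hsub (mem_Icc.mpr ⟨?_, ?_⟩))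
      (Order.covBy_succ_of_not_isMax (not_isMax_of_lt hvw))
    · exact (mem_Icc.mp hv).1.trans (Order.le_succ v)
    · exact (Order.succ_le_of_lt hvw).trans (mem_Icc.mp hw).2
  intro v ⟨_, hv⟩ w ⟨_, hw⟩
  exact le_antisymm (not_lt.mp (key w hw v hv)) (not_lt.mp (key v hv w hw))

open scoped Classical in
def runStartsAfterGap (A : Finset (Fin n)) : Finset (Fin n) :=
  (runStarts A).filter fun v => ¬ IsMin v

lemma mem_runStartsAfterGap {A : Finset (Fin n)} {v : Fin n} :
    v ∈ runStartsAfterGap A ↔ v ∈ A ∧ ¬ IsMin v ∧ Order.pred v ∉ A := by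
  classical
  simp only [runStartsAfterGap, mem_filter, mem_runStarts]
  tauto

lemma card_runStarts_le (A : Finset (Fin n)) :
    (runStarts A).card ≤ (runStartsAfterGap A).card + 1 := by
  classical
  have hmin : ((runStarts A).filter fun v => IsMin v).card ≤ 1 :=
    card_le_one.mpr fun a ha b hb => (le_total a b).elim
      (fun h => (mem_filter.mp hb).2.eq_of_le h)
      (fun h => ((mem_filter.mp ha).2.eq_of_le h).symm)
  have := card_filter_add_card_filter_not (s := runStarts A) (fun v => IsMin v)
  simp only [runStartsAfterGap] at *
  omega

lemma lt_pred_of_mem_runStartsAfterGap {A : Finset (Fin n)} {x y : Fin n} (hx : x ∈ A)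
    (hy : y ∈ runStartsAfterGap A) (hxy : x < y) : x < Order.pred y :=
  (Order.le_pred_of_lt hxy).lt_of_ne fun h => (mem_runStartsAfterGap.mp hy).2.2 (h ▸ hx)

lemma hpw_eq_sup (π : Equiv.Perm (Fin n)) :
    hpw π = univ.sup fun i => max (intervalicity (Iic i)) (intervalicity ((Iic i).image π)) := by
  have hpre : ∀ i, prefixSet π 1 i = (Iic i).image fun j => (j, π j) := fun i => by
    ext; simp [prefixSet]
  simp [hpw, pwOrd, gridComplexity, hpre, image_image, Function.comp_def]

lemma intervalicity_image_Iic_le_hpw (π : Equiv.Perm (Fin n)) (i : Fin n) :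
    intervalicity ((Iic i).image π) ≤ hpw π :=
  hpw_eq_sup π ▸ (le_max_right _ _).trans (le_sup (f := fun i =>
    max (intervalicity (Iic i)) (intervalicity ((Iic i).image π))) (mem_univ i))

/-- Initial segments of positions are intervals, so only the values can carry the width. -/
lemma exists_le_intervalicity_image_Iic {π : Equiv.Perm (Fin n)} {t : ℕ} (ht : 2 ≤ t)
    (h : t ≤ hpw π) : ∃ i, t ≤ intervalicity ((Iic i).image π) := by
  rw [hpw_eq_sup, Finset.le_sup_iff (by simp; omega)] at h
  obtain ⟨i, -, hi⟩ := h
  have := intervalicity_Iic_le_one i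
  exact ⟨i, (le_max_iff.mp hi).resolve_left (by omega)⟩

lemma mem_image_Iic_iff {π : Equiv.Perm (Fin n)} {i₀ x : Fin n} :
    x ∈ (Iic i₀).image π ↔ π.symm x ≤ i₀ := by
  constructor
  · intro hx
    obtain ⟨p, hp, rfl⟩ := mem_image.mp hx
    simpa using hp
  · exact fun hx => mem_image.mpr ⟨_, mem_Iic.mpr hx, π.apply_symm_apply x⟩

/-- Values are `0`-based, so the odd values `v` are those with `Even (v + 1)`. In a horizontal
alternation they occupy a prefix, and no two of them are consecutive. -/
lemma le_hpw_of_isHorizAlt {π : Equiv.Perm (Fin n)} (hπ : IsHorizAlt π) {m : ℕ}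
    (hm : 2 * m ≤ n) : m ≤ hpw π := by
  classical
  rcases Nat.eq_zero_or_pos m with rfl | hm0
  · exact Nat.zero_le _
  set O := univ.filter fun p => Even ((π p).val + 1)
  have hO : O.Nonempty := ⟨π.symm ⟨1, by omega⟩, by simp [O]⟩
  set B := (Iic (O.max' hO)).image π
  have hBodd : ∀ v ∈ B, Even (v.val + 1) := by
    simp only [B, mem_image, mem_Iic]
    rintro _ ⟨p, hp, rfl⟩
    by_contra hodd
    have hmax := (mem_filter.mp (O.max'_mem hO)).2
    exact hπ p _ (hp.lt_of_ne fun h => hodd (h ▸ hmax)) ⟨Nat.not_even_iff_odd.mp hodd, hmax⟩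
  have hcard : m ≤ B.card := by
    simpa using card_le_card_of_injOn (s := (univ : Finset (Fin m)))
      (fun t => (⟨2 * t.val + 1, by omega⟩ : Fin n))
      (fun t _ => mem_image_Iic_iff.mpr (O.le_max' _ (by simp [O, Nat.even_add_one])))
      (fun t _ t' _ h => Fin.ext (by simpa using congrArg Fin.val h))
  refine hcard.trans ((card_le_intervalicity fun v hv w hw hvw => ?_).trans
    (intervalicity_image_Iic_le_hpw π _))
  have := hBodd v hv
  have := hBodd w hw
  rw [Fin.covBy_iff, Nat.covBy_iff_add_one_eq] at hvw
  grind

def DirLT {α : Type*} [LT α] (b : Bool) (x y : α) : Prop := if b then x < y else y < x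

lemma lt_of_dirLT {α β : Type*} [LT α] [LT β] {b : Bool} {f : α → β}
    (hf : ∀ x y, x < y → DirLT b (f x) (f y)) {x y : α} (h : DirLT b x y) : f x < f y := by
  cases b
  · exact hf y x h
  · exact hf x y h

lemma exists_dirLT_of_mul_lt_card {α β : Type*} [LinearOrder α] [LinearOrder β] (g : α → β)
    {s : Finset α} (hg : Set.InjOn g s) {m : ℕ} (h : m * m < s.card) :
    ∃ b, ∃ u ⊆ s, m < u.card ∧ ∀ x ∈ u, ∀ y ∈ u, x < y → DirLT b (g x) (g y) := by
  obtain ⟨u, hus, ⟨hm, hmono⟩ | ⟨hm, hanti⟩⟩ := exists_strictMonoOn_or_strictAntiOn hg h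
  · exact ⟨true, u, hus, hm, fun x hx y hy hxy => hmono hx hy hxy⟩
  · exact ⟨false, u, hus, hm, fun x hx y hy hxy => hanti hx hy hxy⟩

lemma monGriddable_juxH_iff {k : ℕ} {b₁ b₂ : Bool} {σ : Equiv.Perm (Fin k)} :
    MonGriddable (juxH b₁ b₂) σ ↔ ∃ c : Fin k → Fin 2, Monotone c ∧
      ∀ i j, i < j → c i = c j → DirLT (if c i = 0 then b₁ else b₂) (σ i) (σ j) := by
  constructor
  · rintro ⟨c, r, hc, -, -, hcell⟩
    exact ⟨c, hc, fun i j hij hcij => hcell i j hij hcij (Subsingleton.elim _ _) _ rfl⟩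
  · rintro ⟨c, hc, hcell⟩
    refine ⟨c, fun _ => 0, hc, monotone_const, fun _ => rfl, fun i j hij hcij _ b hb => ?_⟩
    exact Option.some_inj.mp hb ▸ hcell i j hij hcij

def flipIf (b : Bool) (m t : ℕ) : ℕ := if b then t else m - 1 - t

def altValue (b₁ b₂ : Bool) (m : ℕ) (i : Fin (2 * m)) : Fin (2 * m) :=
  ⟨if i.val < m then 2 * flipIf b₁ m i + 1 else 2 * flipIf b₂ m (i - m), by
    have := i.isLt; unfold flipIf; split_ifs <;> omega⟩

lemma altValue_injective (b₁ b₂ : Bool) (m : ℕ) : Function.Injective (altValue b₁ b₂ m) :=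
  fun i j h => by
    have hval := congrArg Fin.val h
    have := i.isLt; have := j.isLt
    simp only [altValue, flipIf] at hval
    apply Fin.ext
    split_ifs at hval <;> omega

def monAlt (b₁ b₂ : Bool) (m : ℕ) : Equiv.Perm (Fin (2 * m)) :=
  Equiv.ofBijective _ (altValue_injective b₁ b₂ m).bijective_of_finite

lemma monAlt_val (b₁ b₂ : Bool) (m : ℕ) (i : Fin (2 * m)) : (monAlt b₁ b₂ m i).val =
    if i.val < m then 2 * flipIf b₁ m i + 1 else 2 * flipIf b₂ m (i - m) := rfl

lemma isHorizAlt_monAlt (b₁ b₂ : Bool) (m : ℕ) : IsHorizAlt (monAlt b₁ b₂ m) := by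
  intro i j hij
  simp only [monAlt_val, Nat.odd_iff, Nat.even_iff, Fin.lt_def] at *
  split_ifs <;> omega

lemma monGriddable_monAlt (b₁ b₂ : Bool) (m : ℕ) :
    MonGriddable (juxH b₁ b₂) (monAlt b₁ b₂ m) := by
  refine monGriddable_juxH_iff.mpr ⟨fun i => if i.val < m then 0 else 1, fun i j hij => ?_, ?_⟩
  · simp only [Fin.le_def] at hij
    dsimp only
    split_ifs <;> omega
  · intro i j hij hcij
    have := j.isLt
    rw [Fin.lt_def] at hij
    dsimp only at hcij ⊢
    by_cases hj : j.val < m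
    · have hi : i.val < m := hij.trans hj
      cases b₁ <;> simp only [DirLT, Fin.lt_def, monAlt_val, flipIf, hi, hj, ↓reduceIte,
        Bool.false_eq_true] <;> omega
    · have hi : ¬ i.val < m := fun hi => by simp [hi, hj] at hcij
      cases b₂ <;> simp only [DirLT, Fin.lt_def, monAlt_val, flipIf, hi, hj, ↓reduceIte,
        one_ne_zero, Bool.false_eq_true] <;> omega

/-- The run starts `x ∈ T` lie left of the cut `i₀` and their predecessors right of it, with
values interleaved as `pred x₁ < x₁ < pred x₂ < x₂ < ⋯`; the left column of `σ` is sent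
to the `x`'s and the right column to the `pred x`'s. -/
theorem contains_of_monGriddable_juxH {π : Equiv.Perm (Fin n)} {i₀ : Fin n}
    {T : Finset (Fin n)} (hT : T ⊆ runStartsAfterGap ((Iic i₀).image π)) {b₁ b₂ : Bool}
    (h₁ : ∀ x ∈ T, ∀ y ∈ T, x < y → DirLT b₁ (π.symm x) (π.symm y))
    (h₂ : ∀ x ∈ T, ∀ y ∈ T, x < y →
      DirLT b₂ (π.symm (Order.pred x)) (π.symm (Order.pred y)))
    {k : ℕ} (hk : k ≤ T.card) {σ : Equiv.Perm (Fin k)}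
    (hσ : MonGriddable (juxH b₁ b₂) σ) : Contains π σ := by
  obtain ⟨c, hc, hcell⟩ := monGriddable_juxH_iff.mp hσ
  set e : Fin k → Fin n := fun t => T.orderEmbOfFin rfl (Fin.castLE hk t)
  have he : StrictMono e := (T.orderEmbOfFin rfl).strictMono.comp (Fin.strictMono_castLE hk)
  have heT : ∀ t, e t ∈ T := fun t => T.orderEmbOfFin_mem rfl _
  have hgap : ∀ t, e t ∈ runStartsAfterGap ((Iic i₀).image π) := fun t => hT (heT t)
  set point : Fin k → Fin n := fun j => if c j = 0 then e (σ j) else Order.pred (e (σ j))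
  have hpoint : ∀ i j, σ i < σ j → point i < point j := fun i j hij => by
    have hlt := lt_pred_of_mem_runStartsAfterGap (mem_runStartsAfterGap.mp (hgap (σ i))).1
      (hgap (σ j)) (he hij)
    have hpred := Order.pred_lt_of_not_isMin (mem_runStartsAfterGap.mp (hgap (σ j))).2.1
    simp only [point]
    split_ifs
    · exact hlt.trans hpred
    · exact hlt
    · exact (Order.pred_le _).trans_lt (hlt.trans hpred)
    · exact (Order.pred_le _).trans_lt hlt
  refine ⟨fun j => π.symm (point j), fun i j hij => ?_, fun i j => ?_⟩
  · have hleft : ∀ t, π.symm (e t) ≤ i₀ := fun t =>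
      mem_image_Iic_iff.mp (mem_runStartsAfterGap.mp (hgap t)).1
    have hright : ∀ t, i₀ < π.symm (Order.pred (e t)) := fun t =>
      not_le.mp fun h => (mem_runStartsAfterGap.mp (hgap t)).2.2 (mem_image_Iic_iff.mpr h)
    have hcij := hc hij.le
    simp only [point]
    by_cases hci : c i = 0 <;> by_cases hcj : c j = 0
    · simpa [hci, hcj] using lt_of_dirLT (fun s t hst => h₁ _ (heT s) _ (heT t) (he hst))
        (by simpa [hci] using hcell i j hij (hci.trans hcj.symm))
    · simpa [hci, hcj] using (hleft _).trans_lt (hright _)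
    · exact absurd (le_antisymm (hcj ▸ hcij) (Fin.zero_le _)) hci
    · simpa [hci, hcj] using lt_of_dirLT (fun s t hst => h₂ _ (heT s) _ (heT t) (he hst))
        (by simpa [hci] using hcell i j hij (by omega))
  · have hG : StrictMono (point ∘ σ.symm) := fun s t hst => hpoint _ _ (by simpa using hst)
    simpa using (hG.lt_iff_lt (a := σ i) (b := σ j)).symm

/-- The bound `m ^ 4` comes from applying Erdős–Szekeres twice: once to the positions of the
run starts after a gap, once to the positions of their predecessors. -/
theorem exists_contains_of_le_hpw {π : Equiv.Perm (Fin n)} {m : ℕ} (h : m ^ 4 + 2 ≤ hpw π) :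
    ∃ b₁ b₂ : Bool, ∀ k ≤ m, ∀ σ : Equiv.Perm (Fin k),
      MonGriddable (juxH b₁ b₂) σ → Contains π σ := by
  obtain ⟨i₀, hi₀⟩ := exists_le_intervalicity_image_Iic (by omega) h
  set B := (Iic i₀).image π
  have hG : m * m * (m * m) < (runStartsAfterGap B).card := by
    have := (intervalicity_le_card_runStarts B).trans (card_runStarts_le B)
    linarith [show m ^ 4 = m * m * (m * m) by ring]
  obtain ⟨b₁, T₁, hT₁, hcard₁, hdir₁⟩ :=
    exists_dirLT_of_mul_lt_card π.symm π.symm.injective.injOn hG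
  have hpred : Set.InjOn (π.symm ∘ Order.pred) T₁ := fun x hx y hy hxy =>
    (Order.pred_eq_pred_iff_of_not_isMin (mem_runStartsAfterGap.mp (hT₁ hx)).2.1
      (mem_runStartsAfterGap.mp (hT₁ hy)).2.1).mp (π.symm.injective hxy)
  obtain ⟨b₂, T, hT, hcard, hdir₂⟩ := exists_dirLT_of_mul_lt_card _ hpred hcard₁
  exact ⟨b₁, b₂, fun k hk σ hσ => contains_of_monGriddable_juxH (hT.trans hT₁)
    (fun x hx y hy => hdir₁ x (hT hx) y (hT hy)) hdir₂ (by omega) hσ⟩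

lemma exists_forall_of_antitone {ι : Type*} [Finite ι] {P : ι → ℕ → Prop}
    (hP : ∀ i, Antitone (P i)) (h : ∀ m, ∃ i, P i m) : ∃ i, ∀ m, P i m := by
  by_contra hno
  push Not at hno
  choose M hM using hno
  obtain ⟨N, hN⟩ := Finite.bddAbove_range M
  obtain ⟨i, hi⟩ := h N
  exact hM i (hP i (hN ⟨i, rfl⟩) hi)

lemma unboundedHPW_of_isHorizAlt {C : PermClass}
    (h : ∀ m, ∃ n, ∃ π ∈ C n, 2 * m ≤ n ∧ IsHorizAlt π) : UnboundedHPW C := fun K =>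
  let ⟨n, π, hπ, hn, halt⟩ := h (K + 1)
  ⟨n, π, hπ, le_hpw_of_isHorizAlt halt hn⟩

lemma exists_isHorizAlt_of_juxH_subset {C : PermClass} {b₁ b₂ : Bool}
    (h : ∀ (n : ℕ) (π : Equiv.Perm (Fin n)), MonGriddable (juxH b₁ b₂) π → π ∈ C n)
    (m : ℕ) : ∃ n, ∃ π ∈ C n, 2 * m ≤ n ∧ IsHorizAlt π :=
  ⟨2 * m, monAlt b₁ b₂ m, h _ _ (monGriddable_monAlt b₁ b₂ m), le_rfl,
    isHorizAlt_monAlt b₁ b₂ m⟩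

theorem exists_juxH_subset_of_unboundedHPW {C : PermClass} (hC : IsPermClass C)
    (h : UnboundedHPW C) : ∃ b₁ b₂ : Bool,
      ∀ (n : ℕ) (π : Equiv.Perm (Fin n)), MonGriddable (juxH b₁ b₂) π → π ∈ C n := by
  obtain ⟨⟨b₁, b₂⟩, hall⟩ := exists_forall_of_antitone
    (P := fun (b : Bool × Bool) m =>
      ∀ k ≤ m, ∀ σ : Equiv.Perm (Fin k), MonGriddable (juxH b.1 b.2) σ → σ ∈ C k)
    (fun b m m' hmm' h k hk => h k (hk.trans hmm')) fun m => by
      obtain ⟨n, π, hπ, hlt⟩ := h (m ^ 4 + 1)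
      obtain ⟨b₁, b₂, hcont⟩ := exists_contains_of_le_hpw hlt
      exact ⟨(b₁, b₂), fun k hk σ hσ => hC π σ hπ (hcont k hk σ hσ)⟩
  exact ⟨b₁, b₂, fun n π hπ => hall n n le_rfl π hπ⟩

end

end PPM

/-- for a permutation class `C`, unbounded horizontal path-width,
containing arbitrarily large horizontal alternations, and containing a horizontal
monotone juxtaposition as a subclass are equivalent. -/
theorem unbounded_hpw_tfae (C : PermClass) (hC : IsPermClass C) :
    ((∀ K, ∃ n, ∃ π ∈ C n, K < hpw π) ↔
      (∀ m, ∃ n, ∃ π ∈ C n, 2 * m ≤ n ∧ IsHorizAlt π)) ∧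
    ((∀ K, ∃ n, ∃ π ∈ C n, K < hpw π) ↔
      (∃ b₁ b₂ : Bool, ∀ (n : ℕ) (π : Equiv.Perm (Fin n)),
        MonGriddable (juxH b₁ b₂) π → π ∈ C n)) := by
  have hca : (∃ b₁ b₂ : Bool, ∀ (n : ℕ) (π : Equiv.Perm (Fin n)),
      MonGriddable (juxH b₁ b₂) π → π ∈ C n) → UnboundedHPW C := fun ⟨_, _, h⟩ =>
    unboundedHPW_of_isHorizAlt (exists_isHorizAlt_of_juxH_subset h)
  refine ⟨⟨fun h => ?_, unboundedHPW_of_isHorizAlt⟩,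
    ⟨exists_juxH_subset_of_unboundedHPW hC, hca⟩⟩
  obtain ⟨_, _, hjux⟩ := exists_juxH_subset_of_unboundedHPW hC h
  exact exists_isHorizAlt_of_juxH_subset hjux
end
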